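/- arXiv:1906.06005 — 4 statements merged into one kernel-verified Lean document; each statement's English description precedes it below -/
import Mathlib

section
/- Let F = ₂F₁(4/κ, 1-4/κ; 8/κ; ·) be the hypergeometric function with κ ∈ (0,8). Then F extends continuously to [0,1], F(1) = Γ(8/κ)Γ(8/κ-1)/(Γ(4/κ)Γ(12/κ-1)) > 0, and F(x) > 0 for all x ∈ [0,1]. -/
/-!
For `0 < a < c` and `|x| < 1`, expanding `(1 - x t)^(-b)` in its binomial series and integrating
term by term against Beta integrals gives Euler's representation
`₂F₁(a, b; c; x) = Γ(c) / (Γ(a) Γ(c - a)) * ∫₀¹ t^(a-1) (1-t)^(c-a-1) (1-xt)^(-b) dt`.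
The integrand is positive on `(0, 1)`, and when `a + b < c` it is dominated, uniformly in
`x ∈ [0, 1]`, by `t^(a-1) (1-t)^(c-a-1) + t^(a-1) (1-t)^(c-a-b-1)`, which is integrable. So the
integral is continuous and positive on `[0, 1]`, and at `x = 1` it is the Beta integral
`B(a, c - a - b)`, which yields Gauss's value `Γ(c) Γ(c-a-b) / (Γ(c-a) Γ(c-b))`.
Here `a = 4/κ`, `b = 1 - 4/κ`, `c = 8/κ`.
-/

open Filter Set
open MeasureTheory intervalIntegral Polynomial
open scoped Interval

lemma Ring.choose_add_sub_one_eq_ascPochhammer_div {K : Type*} [Field K] [CharZero K] (b : K)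
    (n : ℕ) : Ring.choose (b + n - 1) n = (ascPochhammer K n).eval b / n.factorial := by
  rw [← Ring.multichoose_eq, ← ascPochhammer_smeval_eq_eval,
    ← Ring.factorial_nsmul_multichoose_eq_ascPochhammer, nsmul_eq_mul,
    mul_div_cancel_left₀ _ (Nat.cast_ne_zero.2 n.factorial_ne_zero)]

lemma hasSum_ascPochhammer_div_factorial_mul_pow (b : ℝ) {u : ℝ} (hu : |u| < 1) :
    HasSum (fun n : ℕ => (ascPochhammer ℝ n).eval b / n.factorial * u ^ n)
      ((1 - u) ^ (-b)) := by
  have h := (Real.one_div_one_sub_rpow_hasFPowerSeriesOnBall_zero b).hasSum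
    (y := u) (by simpa [Real.enorm_eq_ofReal_abs] using hu)
  rw [Real.rpow_neg (by linarith [le_abs_self u])]
  simpa [FormalMultilinearSeries.ofScalars_apply_eq, Ring.choose_add_sub_one_eq_ascPochhammer_div,
    mul_comm] using h

lemma summable_abs_ascPochhammer_div_factorial_mul_pow (b : ℝ) {u : ℝ} (hu : |u| < 1) :
    Summable (fun n : ℕ => |(ascPochhammer ℝ n).eval b / n.factorial * u ^ n|) := by
  have h := FormalMultilinearSeries.summable_norm_apply _ (x := u) <|
    lt_of_lt_of_le (by simpa [Real.enorm_eq_ofReal_abs] using hu)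
      (Real.one_div_one_sub_rpow_hasFPowerSeriesOnBall_zero b).r_le
  simpa [FormalMultilinearSeries.ofScalars_apply_eq, Ring.choose_add_sub_one_eq_ascPochhammer_div,
    abs_mul, abs_div, mul_comm] using h

lemma Complex.ofReal_rpow_mul_one_sub_rpow {t : ℝ} (ht₀ : 0 ≤ t) (ht₁ : t ≤ 1)
    (u v : ℝ) :
    ((t ^ (u - 1) * (1 - t) ^ (v - 1) : ℝ) : ℂ) =
      (t : ℂ) ^ ((u : ℂ) - 1) * (1 - (t : ℂ)) ^ ((v : ℂ) - 1) := by
  rw [Complex.ofReal_mul, Complex.ofReal_cpow ht₀, Complex.ofReal_cpow (by linarith)]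
  push_cast
  rfl

lemma intervalIntegrable_rpow_mul_one_sub_rpow {u v : ℝ} (hu : 0 < u) (hv : 0 < v) :
    IntervalIntegrable (fun t : ℝ => t ^ (u - 1) * (1 - t) ^ (v - 1)) volume 0 1 := by
  have h := Complex.betaIntegral_convergent (u := u) (v := v) (by simpa) (by simpa)
  rw [intervalIntegrable_iff_integrableOn_Ioc_of_le zero_le_one] at h ⊢
  have hre : IntegrableOn (fun t : ℝ =>
      ((t : ℂ) ^ ((u : ℂ) - 1) * (1 - (t : ℂ)) ^ ((v : ℂ) - 1)).re) (Ioc 0 1) := h.re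
  refine hre.congr_fun (fun t ht => ?_) measurableSet_Ioc
  simp only [← Complex.ofReal_rpow_mul_one_sub_rpow ht.1.le ht.2, Complex.ofReal_re]

lemma integral_rpow_mul_one_sub_rpow {u v : ℝ} (hu : 0 < u) (hv : 0 < v) :
    ∫ t in (0:ℝ)..1, t ^ (u - 1) * (1 - t) ^ (v - 1) =
      Real.Gamma u * Real.Gamma v / Real.Gamma (u + v) := by
  have h := Complex.betaIntegral_eq_Gamma_mul_div (u := u) (v := v) (by simpa) (by simpa)
  rw [Complex.betaIntegral, ← Complex.ofReal_add, Complex.Gamma_ofReal, Complex.Gamma_ofReal,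
    Complex.Gamma_ofReal] at h
  apply Complex.ofReal_injective
  push_cast
  rw [← h, ← intervalIntegral.integral_ofReal]
  refine intervalIntegral.integral_congr (fun t ht => ?_)
  rw [uIcc_of_le zero_le_one] at ht
  exact Complex.ofReal_rpow_mul_one_sub_rpow ht.1 ht.2 u v

lemma Real.Gamma_add_nat_eq_ascPochhammer_mul {s : ℝ} (hs : 0 < s) (n : ℕ) :
    Real.Gamma (s + n) = (ascPochhammer ℝ n).eval s * Real.Gamma s := by
  induction n with
  | zero => simp
  | succ n ih =>
    rw [Nat.cast_succ, ← add_assoc, Real.Gamma_add_one (by positivity), ih,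
      ascPochhammer_succ_right, eval_mul, eval_add, eval_X, eval_natCast]
    ring

lemma ae_mem_Ioo_of_mem_uIoc {a b : ℝ} (hab : a ≤ b) :
    ∀ᵐ t : ℝ, t ∈ Ι a b → t ∈ Ioo a b := by
  rw [uIoc_of_le hab]
  filter_upwards [Ioo_ae_eq_Ioc (a := a) (b := b)] with t ht using ht.mpr

noncomputable def eulerIntegrand (a b c x t : ℝ) : ℝ :=
  t ^ (a - 1) * (1 - t) ^ (c - a - 1) * (1 - x * t) ^ (-b)

noncomputable def eulerIntegral (a b c x : ℝ) : ℝ :=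
  ∫ t in (0:ℝ)..1, eulerIntegrand a b c x t

section EulerIntegral

variable {a b c x t : ℝ}

lemma measurable_eulerIntegrand : Measurable (eulerIntegrand a b c x) := by
  unfold eulerIntegrand
  fun_prop

lemma eulerIntegrand_pos (hx : x ≤ 1) (ht : t ∈ Ioo 0 1) : 0 < eulerIntegrand a b c x t := by
  obtain ⟨ht₀, ht₁⟩ := ht
  have hxt : x * t < 1 := by nlinarith
  unfold eulerIntegrand
  have := sub_pos.2 ht₁
  have := sub_pos.2 hxt
  positivity

lemma norm_eulerIntegrand_le (hx : x ∈ Icc 0 1) (ht : t ∈ Ioo 0 1) :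
    ‖eulerIntegrand a b c x t‖ ≤
      t ^ (a - 1) * (1 - t) ^ (c - a - 1) + t ^ (a - 1) * (1 - t) ^ (c - a - b - 1) := by
  rw [Real.norm_of_nonneg (eulerIntegrand_pos hx.2 ht).le]
  obtain ⟨hx₀, hx₁⟩ := hx
  obtain ⟨ht₀, ht₁⟩ := ht
  have hxt₀ : 0 ≤ x * t := by positivity
  have hxt₁ : x * t ≤ t := by nlinarith
  have hfactor : (1 - x * t) ^ (-b) ≤ 1 + (1 - t) ^ (-b) := by
    rcases le_or_gt 0 (-b) with hb | hb
    · have := Real.rpow_le_one (x := 1 - x * t) (by linarith) (by linarith) hb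
      linarith [Real.rpow_nonneg (sub_pos.2 ht₁).le (-b)]
    · have := Real.rpow_le_rpow_of_nonpos (sub_pos.2 ht₁)
        (by linarith : 1 - t ≤ 1 - x * t) hb.le
      linarith
  calc eulerIntegrand a b c x t
      ≤ t ^ (a - 1) * (1 - t) ^ (c - a - 1) * (1 + (1 - t) ^ (-b)) := by
        unfold eulerIntegrand
        have := sub_pos.2 ht₁
        gcongr
    _ = t ^ (a - 1) * (1 - t) ^ (c - a - 1) + t ^ (a - 1) * (1 - t) ^ (c - a - b - 1) := by
        rw [mul_add, mul_one, mul_assoc, ← Real.rpow_add (sub_pos.2 ht₁)]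
        ring_nf

lemma intervalIntegrable_eulerIntegrand_bound (ha : 0 < a) (hca : a < c) (hcab : a + b < c) :
    IntervalIntegrable
      (fun t => t ^ (a - 1) * (1 - t) ^ (c - a - 1) + t ^ (a - 1) * (1 - t) ^ (c - a - b - 1))
      volume 0 1 :=
  (intervalIntegrable_rpow_mul_one_sub_rpow ha (by linarith)).add
    (intervalIntegrable_rpow_mul_one_sub_rpow ha (by linarith))

lemma intervalIntegrable_eulerIntegrand (ha : 0 < a) (hca : a < c) (hcab : a + b < c)
    (hx : x ∈ Icc 0 1) : IntervalIntegrable (eulerIntegrand a b c x) volume 0 1 := by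
  refine (intervalIntegrable_eulerIntegrand_bound ha hca hcab).mono_fun'
    measurable_eulerIntegrand.aestronglyMeasurable ?_
  rw [EventuallyLE, ae_restrict_iff' measurableSet_uIoc]
  filter_upwards [ae_mem_Ioo_of_mem_uIoc zero_le_one] with t ht ht'
    using norm_eulerIntegrand_le hx (ht ht')

lemma eulerIntegral_pos (ha : 0 < a) (hca : a < c) (hcab : a + b < c) (hx : x ∈ Icc 0 1) :
    0 < eulerIntegral a b c x :=
  intervalIntegral_pos_of_pos_on (intervalIntegrable_eulerIntegrand ha hca hcab hx)
    (fun _ ht => eulerIntegrand_pos hx.2 ht) one_pos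

lemma continuousOn_eulerIntegral (ha : 0 < a) (hca : a < c) (hcab : a + b < c) :
    ContinuousOn (eulerIntegral a b c) (Icc 0 1) := by
  intro x₀ hx₀
  refine continuousWithinAt_of_dominated_interval
    (eventually_nhdsWithin_of_forall fun _ _ => measurable_eulerIntegrand.aestronglyMeasurable)
    (eventually_nhdsWithin_of_forall fun x hx => ?_)
    (intervalIntegrable_eulerIntegrand_bound ha hca hcab) ?_
  · filter_upwards [ae_mem_Ioo_of_mem_uIoc zero_le_one] with t ht ht'
      using norm_eulerIntegrand_le hx (ht ht')
  · filter_upwards [ae_mem_Ioo_of_mem_uIoc zero_le_one] with t ht ht'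
    have hpos : 1 - x₀ * t ≠ 0 := by nlinarith [hx₀.2, (ht ht').1, (ht ht').2]
    unfold eulerIntegrand
    exact ((continuousAt_const.sub (continuousAt_id.mul continuousAt_const)).rpow_const
      (Or.inl hpos)).continuousWithinAt.const_mul _

lemma eulerIntegral_one (ha : 0 < a) (hcab : a + b < c) :
    eulerIntegral a b c 1 = Real.Gamma a * Real.Gamma (c - a - b) / Real.Gamma (c - b) := by
  have h : ∀ᵐ t : ℝ, t ∈ Ι (0:ℝ) 1 →
      eulerIntegrand a b c 1 t = t ^ (a - 1) * (1 - t) ^ (c - a - b - 1) := by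
    filter_upwards [ae_mem_Ioo_of_mem_uIoc zero_le_one] with t ht ht'
    rw [eulerIntegrand, one_mul, mul_assoc, ← Real.rpow_add (sub_pos.2 (ht ht').2)]
    ring_nf
  rw [eulerIntegral, integral_congr_ae h,
    integral_rpow_mul_one_sub_rpow ha (by linarith), show a + (c - a - b) = c - b by ring]

lemma hasSum_integral_eulerIntegrand_termwise (ha : 0 < a) (hca : a < c) (hx : |x| < 1) :
    HasSum (fun n : ℕ => (ascPochhammer ℝ n).eval b / n.factorial * x ^ n *
        ∫ t in (0:ℝ)..1, t ^ (a + n - 1) * (1 - t) ^ (c - a - 1))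
      (eulerIntegral a b c x) := by
  set d : ℕ → ℝ := fun n => (ascPochhammer ℝ n).eval b / n.factorial * x ^ n
  simp only [← intervalIntegral.integral_const_mul]
  refine hasSum_integral_of_dominated_convergence
    (fun n t => |d n| * (t ^ (a - 1) * (1 - t) ^ (c - a - 1)))
    (fun n => by fun_prop) (fun n => ?_) (.of_forall fun t _ => ?_) ?_ ?_
  · filter_upwards [ae_mem_Ioo_of_mem_uIoc zero_le_one] with t ht ht'
    obtain ⟨ht₀, ht₁⟩ := ht ht'
    rw [norm_mul, Real.norm_eq_abs, Real.norm_of_nonneg (by positivity)]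
    refine mul_le_mul_of_nonneg_left (mul_le_mul_of_nonneg_right ?_ (by positivity)) (abs_nonneg _)
    exact Real.rpow_le_rpow_of_exponent_ge ht₀ ht₁.le (by linarith [n.cast_nonneg (α := ℝ)])
  · exact (summable_abs_ascPochhammer_div_factorial_mul_pow b hx).mul_right _
  · simp_rw [tsum_mul_right]
    exact (intervalIntegrable_rpow_mul_one_sub_rpow ha (by linarith)).const_mul _
  · filter_upwards [ae_mem_Ioo_of_mem_uIoc zero_le_one] with t ht ht'
    obtain ⟨ht₀, ht₁⟩ := ht ht'
    have hxt : |x * t| < 1 := by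
      rw [abs_mul, abs_of_pos ht₀]; nlinarith [abs_nonneg x]
    refine ((hasSum_ascPochhammer_div_factorial_mul_pow b hxt).mul_left
      (t ^ (a - 1) * (1 - t) ^ (c - a - 1))).congr_fun fun n => ?_
    rw [add_sub_right_comm, Real.rpow_add ht₀, Real.rpow_natCast, mul_pow]
    ring

lemma hasSum_eulerIntegral (ha : 0 < a) (hca : a < c) (hx : |x| < 1) :
    HasSum (fun n : ℕ => (ascPochhammer ℝ n).eval a * (ascPochhammer ℝ n).eval b /
        ((ascPochhammer ℝ n).eval c * n.factorial) * x ^ n)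
      (Real.Gamma c / (Real.Gamma a * Real.Gamma (c - a)) * eulerIntegral a b c x) := by
  have hc : 0 < c := ha.trans hca
  have hΓa := (Real.Gamma_pos_of_pos ha).ne'
  have hΓca := (Real.Gamma_pos_of_pos (sub_pos.2 hca)).ne'
  have hΓc := (Real.Gamma_pos_of_pos hc).ne'
  refine ((hasSum_integral_eulerIntegrand_termwise (b := b) ha hca hx).mul_left
    (Real.Gamma c / (Real.Gamma a * Real.Gamma (c - a)))).congr_fun fun n => ?_
  rw [integral_rpow_mul_one_sub_rpow (by positivity) (sub_pos.2 hca),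
    show a + n + (c - a) = c + n by ring, Real.Gamma_add_nat_eq_ascPochhammer_mul ha,
    Real.Gamma_add_nat_eq_ascPochhammer_mul hc]
  have hc_n := (ascPochhammer_pos n c hc).ne'
  field_simp

end EulerIntegral

/-- **Positivity and boundary value of the hypergeometric function**
`F = ₂F₁(4/κ, 1-4/κ; 8/κ; ·)` for `κ ∈ (0,8)`: `F` extends continuously to `[0,1]`,
`F 1 = Γ(8/κ)Γ(8/κ-1)/(Γ(4/κ)Γ(12/κ-1)) > 0`, and `F > 0` on `[0,1]`. -/
theorem stmt_0 (κ : ℝ) (hκ₀ : 0 < κ) (hκ₈ : κ < 8) :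
    ∃ F : ℝ → ℝ, ContinuousOn F (Set.Icc 0 1) ∧
      (∀ x ∈ Set.Ico (0:ℝ) 1,
        F x = ∑' n : ℕ,
          (Polynomial.eval (4/κ) (ascPochhammer ℝ n) *
              Polynomial.eval (1 - 4/κ) (ascPochhammer ℝ n) /
            (Polynomial.eval (8/κ) (ascPochhammer ℝ n) * (n.factorial : ℝ))) * x ^ n) ∧
      F 1 = Real.Gamma (8/κ) * Real.Gamma (8/κ - 1) /
          (Real.Gamma (4/κ) * Real.Gamma (12/κ - 1)) ∧
      0 < Real.Gamma (8/κ) * Real.Gamma (8/κ - 1) /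
          (Real.Gamma (4/κ) * Real.Gamma (12/κ - 1)) ∧
      ∀ x ∈ Set.Icc (0:ℝ) 1, 0 < F x := by
  have ha : 0 < 4 / κ := by positivity
  have hca : 4 / κ < 8 / κ := by gcongr; norm_num
  have hcab : 4 / κ + (1 - 4 / κ) < 8 / κ := by rw [lt_div_iff₀ hκ₀]; linarith
  have hc_sub_a : 8 / κ - 4 / κ = 4 / κ := by ring
  have hc_sub_a_sub_b : 8 / κ - 4 / κ - (1 - 4 / κ) = 8 / κ - 1 := by ring
  have hc_sub_b : 8 / κ - (1 - 4 / κ) = 12 / κ - 1 := by ring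
  have hΓ₄ := Real.Gamma_pos_of_pos ha
  have hΓ₈ := Real.Gamma_pos_of_pos (ha.trans hca)
  have hΓ₈₁ := Real.Gamma_pos_of_pos (by linarith : 0 < 8 / κ - 1)
  have hΓ₁₂ := Real.Gamma_pos_of_pos (by linarith : 0 < 12 / κ - 1)
  refine ⟨fun x => Real.Gamma (8 / κ) / (Real.Gamma (4 / κ) * Real.Gamma (8 / κ - 4 / κ)) *
      eulerIntegral (4 / κ) (1 - 4 / κ) (8 / κ) x,
    continuousOn_const.mul (continuousOn_eulerIntegral ha hca hcab),
    fun x hx =>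
      (hasSum_eulerIntegral ha hca (abs_lt.2 ⟨by linarith [hx.1], hx.2⟩)).tsum_eq.symm,
    ?_, by positivity, fun x hx => mul_pos ?_ (eulerIntegral_pos ha hca hcab hx)⟩
  · dsimp only
    rw [eulerIntegral_one ha hcab, hc_sub_a_sub_b, hc_sub_b, hc_sub_a]
    field_simp
  · rw [hc_sub_a]
    positivity
end

section
/- Let η₊ and η₋ be two chordal Loewner curves in ℍ with η₊ not hitting (-∞, w₋] and η₋ not hitting [w₊, ∞), where w₋ < w₊. For t₊ ≤ t₊' and t₋ ≤ t₋' in the respective lifespans, the capacity function m(t₊,t₋) := hcap₂(Hull(η₊[0,t₊] ∪ η₋[0,t₋])) satisfies m(t₊',t₋') - m(t₊',t₋) - m(t₊,t₋') + m(t₊,t₋) ≤ 0. Consequently m is Lipschitz with constant 1 in each variable. -/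
/-!
If `K₀ ⊆ K₁, K₂ ⊆ K` are hulls and every point of `∂(ℍ \ K) ∩ ℍ` lies in `K₁ ∪ K₂`, then
`Im (g₁ + g₂ - g₀ - g) ≤ 0` on `ℍ \ K` by the maximum principle: the function tends to `0` at `∞`,
and at a boundary point one of `Im g₁, Im g₂` tends to `0`, while the other is at most `Im g₀`
(monotonicity of mapping-out functions) and `Im g > 0`. Reading off the coefficient of `1/z`
along `z = iy`, `y → ∞`, gives `hcap K + hcap K₀ ≤ hcap K₁ + hcap K₂`. The boundary behaviour
`Im g → 0` holds because `g` is a homeomorphism of `ℍ \ K` onto `ℍ` with `g z - z` bounded.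
Lipschitz continuity follows from the rectangle inequality, monotonicity and `m(t, 0) = t`.
-/

open Complex Filter Set Metric Bornology Topology

noncomputable section

/-- The open upper half-plane `ℍ`. -/
def UHP : Set ℂ := {z : ℂ | 0 < z.im}

/-- `K^doub`: the closure of `K` together with its reflection across `ℝ`. -/
def Kdoub (K : Set ℂ) : Set ℂ := closure K ∪ (starRingEnd ℂ) '' closure K

/-- `a_K = min (cl K ∩ ℝ)`. -/
def aK (K : Set ℂ) : ℝ := sInf {x : ℝ | (x : ℂ) ∈ closure K}

/-- `b_K = max (cl K ∩ ℝ)`. -/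
def bK (K : Set ℂ) : ℝ := sSup {x : ℝ | (x : ℂ) ∈ closure K}

/-- The segment `[a_K, b_K]` regarded as a subset of `ℂ`. -/
def seg (K : Set ℂ) : Set ℂ := (fun t : ℝ => (t : ℂ)) '' Set.Icc (aK K) (bK K)

/-- `K` is an `ℍ`-hull with mapping-out function `g` (normalized hydrodynamically at `∞`),
whose Schwarz reflection maps the complement of `K^doub ∪ [a_K, b_K]` onto `ℂ \ S_K`
for the compact set `S = S_K ⊆ ℝ`. -/
structure IsHullMap (K : Set ℂ) (g : ℂ → ℂ) (S : Set ℝ) : Prop where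
  subset_UHP : K ⊆ UHP
  bounded : IsBounded K
  relClosed : ∀ z ∈ closure K, 0 < z.im → z ∈ K
  holo : DifferentiableOn ℂ g (UHP \ K)
  bij : Set.BijOn g (UHP \ K) UHP
  hydro : Tendsto (fun z => g z - z) (Bornology.cobounded ℂ) (nhds 0)
  compactS : IsCompact S
  ext_holo : K.Nonempty → DifferentiableOn ℂ g {z : ℂ | z ∉ Kdoub K}
  real_vals : K.Nonempty → ∀ x : ℝ, (x : ℂ) ∉ Kdoub K → (g (x : ℂ)).im = 0
  conj_symm : K.Nonempty → ∀ z : ℂ, z ∉ Kdoub K → g ((starRingEnd ℂ) z) = (starRingEnd ℂ) (g z)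
  extBij : K.Nonempty →
    Set.BijOn g {z : ℂ | z ∉ Kdoub K ∧ z ∉ seg K} {z : ℂ | ∀ s ∈ S, z ≠ (s : ℂ)}

/-- `g` has half-plane capacity `c` : `g z = z + c / z + O(1/z²)` near `∞`. -/
def HasHcap (g : ℂ → ℂ) (c : ℝ) : Prop :=
  Tendsto (fun z : ℂ => z * (g z - z)) (Bornology.cobounded ℂ) (nhds (c : ℂ))

lemma ofReal_mul_I_mem_UHP {y : ℝ} (hy : 0 < y) : (y : ℂ) * I ∈ UHP := by
  simpa [UHP] using hy

lemma tendsto_ofReal_mul_I_cobounded : Tendsto (fun y : ℝ => (y : ℂ) * I) atTop (cobounded ℂ) := by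
  rw [← tendsto_norm_atTop_iff_cobounded]
  simpa using tendsto_abs_atTop_atTop

lemma eventually_ofReal_mul_I_mem_UHP_diff {K : Set ℂ} (hK : IsBounded K) :
    ∀ᶠ y : ℝ in atTop, (y : ℂ) * I ∈ UHP \ K :=
  (eventually_gt_atTop 0).mp <|
    (tendsto_ofReal_mul_I_cobounded.eventually (isBounded_def.mp hK)).mono
    fun _ hK hy => ⟨ofReal_mul_I_mem_UHP hy, hK⟩

lemma isPreconnected_setOf_im_pos_and_lt_norm (r : ℝ) :
    IsPreconnected {w : ℂ | 0 < w.im ∧ r < ‖w‖} := by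
  have hpolar : {w : ℂ | 0 < w.im ∧ r < ‖w‖} =
      (fun p : ℝ × ℝ => (p.1 : ℂ) * exp (p.2 * I)) '' (Ioi (max r 0) ×ˢ Ioo 0 Real.pi) := by
    ext w
    constructor
    · rintro ⟨him, hr⟩
      have harg : arg w ≠ 0 := fun h => him.ne' (arg_eq_zero_iff.1 h).2
      refine ⟨(‖w‖, arg w), ⟨max_lt hr (norm_pos_iff.2 fun h => by simp [h] at him), ?_, ?_⟩,
        norm_mul_exp_arg_mul_I w⟩
      · exact (arg_nonneg_iff.2 him.le).lt_of_ne' harg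
      · exact arg_lt_pi_iff.2 (Or.inr him.ne')
    · rintro ⟨⟨ρ, θ⟩, ⟨hρ, hθ₀, hθπ⟩, rfl⟩
      have hρ₀ : 0 < ρ := (le_max_right r 0).trans_lt hρ
      refine ⟨?_, ?_⟩
      · simpa [exp_ofReal_mul_I_re, exp_ofReal_mul_I_im] using
          mul_pos hρ₀ (Real.sin_pos_of_pos_of_lt_pi hθ₀ hθπ)
      · simpa [norm_exp_ofReal_mul_I, abs_of_pos hρ₀] using (le_max_left r 0).trans_lt hρ
  rw [hpolar]
  exact (isPreconnected_Ioi.prod isPreconnected_Ioo).image _ (by fun_prop)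

lemma DifferentiableOn.isOpen_image_of_injOn {Ω V : Set ℂ} {g : ℂ → ℂ} (hΩ : IsOpen Ω)
    (hg : DifferentiableOn ℂ g Ω) (hinj : InjOn g Ω) (hV : V ⊆ Ω) (hVo : IsOpen V) :
    IsOpen (g '' V) := by
  rw [isOpen_iff_mem_nhds]
  rintro _ ⟨v, hv, rfl⟩
  refine (hg.analyticAt (hΩ.mem_nhds (hV hv))).eventually_constant_or_nhds_le_map_nhds.resolve_left
    (fun hconst => ?_) (image_mem_map (hVo.mem_nhds hv))
  -- an injective map is nowhere locally constant, since `v` is not isolated in `ℂ`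
  obtain ⟨z, ⟨hgz, hzΩ⟩, hzv⟩ := (((hconst.and (hΩ.mem_nhds (hV hv))).filter_mono
    nhdsWithin_le_nhds).and (self_mem_nhdsWithin (s := {v}ᶜ))).exists
  exact hzv (hinj hzΩ (hV hv) hgz)

lemma Set.BijOn.continuousOn_invFunOn {α β : Type*} [TopologicalSpace α] [TopologicalSpace β]
    [Nonempty α] {f : α → β} {s : Set α} {t : Set β} (hf : BijOn f s t) (hs : IsOpen s)
    (hopen : ∀ u ⊆ s, IsOpen u → IsOpen (f '' u)) : ContinuousOn (Function.invFunOn f s) t := by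
  rw [_root_.continuousOn_iff']
  refine fun u hu => ⟨f '' (u ∩ s), hopen _ inter_subset_right (hu.inter hs), ?_⟩
  ext w
  constructor
  · rintro ⟨hwu, hwt⟩
    exact ⟨⟨_, ⟨hwu, hf.surjOn.mapsTo_invFunOn hwt⟩, hf.invOn_invFunOn.2 hwt⟩, hwt⟩
  · rintro ⟨⟨z, ⟨hzu, hzs⟩, rfl⟩, hwt⟩
    exact ⟨by rwa [mem_preimage, hf.invOn_invFunOn.1 hzs], hwt⟩

lemma isOpen_UHP : IsOpen UHP := isOpen_lt continuous_const continuous_im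

lemma eqOn_im_of_isMaxOn {Ω : Set ℂ} {F : ℂ → ℂ} (hΩo : IsOpen Ω) (hΩc : IsPreconnected Ω)
    (hF : DifferentiableOn ℂ F Ω) {a : ℂ} (ha : a ∈ Ω)
    (hmax : IsMaxOn (fun z => (F z).im) Ω a) :
    EqOn (fun z => (F z).im) (Function.const ℂ (F a).im) Ω := by
  have hnorm : ∀ z, ‖exp (-I * F z)‖ = Real.exp (F z).im := fun z => by simp [norm_exp]
  have hconst := Complex.norm_eqOn_of_isPreconnected_of_isMaxOn hΩc hΩo
    (hF.const_mul (-I)).cexp ha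
    (isMaxOn_iff.2 fun z hz => by
      simp only [Function.comp_apply, hnorm]
      exact Real.exp_le_exp.2 (isMaxOn_iff.1 hmax z hz))
  intro z hz
  have := hconst hz
  simp only [Function.comp_apply, Function.const_apply, hnorm] at this
  exact Real.exp_injective this

lemma exists_mem_of_not_isBounded {E : Type*} [Bornology E] {Ω : Set E} {P : E → Prop}
    (hΩ : ¬IsBounded Ω) (hP : ∀ᶠ z in cobounded E, P z) : ∃ z ∈ Ω, P z := by
  by_contra! hno
  exact hΩ (isBounded_def.2 (mem_of_superset hP fun z hz hzΩ => hno z hzΩ hz))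

lemma exists_seq_tendsto_sSup_of_eventually_lt {E : Type*} [NormedAddCommGroup E]
    [ProperSpace E] {Ω : Set E} {f : E → ℝ} (hΩ : Ω.Nonempty) (hf : BddAbove (f '' Ω)) {c : ℝ}
    (hc : c < sSup (f '' Ω)) (hfar : ∀ᶠ z in cobounded E, f z < c) :
    ∃ zs : ℕ → E, ∃ a, (∀ n, zs n ∈ Ω) ∧ Tendsto zs atTop (𝓝 a) ∧
      Tendsto (fun n => f (zs n)) atTop (𝓝 (sSup (f '' Ω))) := by
  obtain ⟨u, -, hu, huS⟩ := exists_seq_tendsto_sSup (hΩ.image f) hf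
  choose zs hzsΩ hzsu using huS
  obtain ⟨R, -, hR⟩ := hasBasis_cobounded_norm.eventually_iff.1 hfar
  have hbdd : ∀ᶠ n in atTop, zs n ∈ closedBall (0 : E) R :=
    (hu.eventually_const_lt hc).mono fun n hn =>
      mem_closedBall_zero_iff.2 (not_lt.1 fun hRn => (hR hRn.le).not_gt (by rwa [hzsu]))
  obtain ⟨a, -, φ, hφ, hlim⟩ := (isCompact_closedBall (0 : E) R).tendsto_subseq' hbdd.frequently
  refine ⟨zs ∘ φ, a, fun n => hzsΩ _, hlim, ?_⟩
  simp only [Function.comp_apply, hzsu]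
  exact hu.comp hφ.tendsto_atTop

theorem im_nonpos_of_frontier {Ω : Set ℂ} {F : ℂ → ℂ} (hΩo : IsOpen Ω) (hΩc : IsPreconnected Ω)
    (hΩb : ¬IsBounded Ω) (hF : DifferentiableOn ℂ F Ω) (hF0 : Tendsto F (cobounded ℂ) (𝓝 0))
    (hFC : ∃ C, ∀ z ∈ Ω, (F z).im ≤ C)
    (hfr : ∀ p ∈ frontier Ω, ∀ ε > 0, ∀ᶠ z in 𝓝[Ω] p, (F z).im < ε) {z : ℂ} (hz : z ∈ Ω) :
    (F z).im ≤ 0 := by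
  obtain ⟨C, hC⟩ := hFC
  have hS : BddAbove ((fun z => (F z).im) '' Ω) := ⟨C, forall_mem_image.2 hC⟩
  set s := sSup ((fun z => (F z).im) '' Ω)
  have hle : ∀ z ∈ Ω, (F z).im ≤ s := fun z hz => le_csSup hS (mem_image_of_mem _ hz)
  by_contra! hpos
  have hs : 0 < s := hpos.trans_le (hle z hz)
  have hfar : ∀ᶠ z in cobounded ℂ, (F z).im < s / 2 :=
    ((continuous_im.tendsto' 0 0 rfl).comp hF0).eventually_lt_const (half_pos hs)
  obtain ⟨zs, a, hzsΩ, hlim, hFlim⟩ :=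
    exists_seq_tendsto_sSup_of_eventually_lt ⟨z, hz⟩ hS (half_lt_self hs) hfar
  by_cases ha : a ∈ Ω
  · have hFa : (F a).im = s := tendsto_nhds_unique ((continuous_im.continuousAt.comp
      (hF.continuousOn.continuousAt (hΩo.mem_nhds ha))).tendsto.comp hlim) hFlim
    have hconst := eqOn_im_of_isMaxOn hΩo hΩc hF ha (isMaxOn_iff.2 fun z hz => hFa ▸ hle z hz)
    obtain ⟨w, hwΩ, hw⟩ := exists_mem_of_not_isBounded hΩb hfar
    have := hconst hwΩ
    simp only [Function.const_apply] at this
    linarith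
  · have hafr : a ∈ frontier Ω :=
      ⟨mem_closure_of_tendsto hlim (Eventually.of_forall hzsΩ), by rwa [hΩo.interior_eq]⟩
    have hlim' : Tendsto zs atTop (𝓝[Ω] a) :=
      tendsto_nhdsWithin_iff.2 ⟨hlim, Eventually.of_forall hzsΩ⟩
    obtain ⟨n, hn₁, hn₂⟩ := ((hlim'.eventually (hfr a hafr _ (half_pos hs))).and
      (hFlim.eventually_const_lt (half_lt_self hs))).exists
    exact (lt_asymm hn₁ hn₂).elim

lemma nonneg_of_tendsto_mul_of_im_nonpos {u : ℂ → ℂ} {d : ℝ}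
    (hu : Tendsto (fun z => z * u z) (cobounded ℂ) (𝓝 (d : ℂ)))
    (him : ∀ᶠ y : ℝ in atTop, (u (y * I)).im ≤ 0) : 0 ≤ d := by
  have hre := (continuous_re.tendsto _).comp (hu.comp tendsto_ofReal_mul_I_cobounded)
  refine ge_of_tendsto (by simpa using hre) ?_
  filter_upwards [him, eventually_ge_atTop 0] with y hy hy0
  simpa [mul_re] using mul_nonneg hy0 (neg_nonneg.2 hy)

structure IsMappingOut (K : Set ℂ) (g : ℂ → ℂ) : Prop where
  isBounded : IsBounded K
  isOpen : IsOpen (UHP \ K)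
  isPreconnected : IsPreconnected (UHP \ K)
  differentiableOn : DifferentiableOn ℂ g (UHP \ K)
  bijOn : BijOn g (UHP \ K) UHP
  tendsto_sub : Tendsto (fun z => g z - z) (cobounded ℂ) (𝓝 0)

namespace IsMappingOut

variable {K K₀ K₁ K₂ : Set ℂ} {g g₀ g₁ g₂ : ℂ → ℂ}

lemma im_pos (h : IsMappingOut K g) {z : ℂ} (hz : z ∈ UHP \ K) : 0 < (g z).im :=
  h.bijOn.mapsTo hz

lemma not_isBounded (h : IsMappingOut K g) : ¬IsBounded (UHP \ K) := fun hb =>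
  ((eventually_ofReal_mul_I_mem_UHP_diff h.isBounded).and
    (tendsto_ofReal_mul_I_cobounded.eventually (isBounded_def.mp hb))).exists.elim
    fun _ hy => hy.2 hy.1

lemma continuousOn_invFunOn (h : IsMappingOut K g) :
    ContinuousOn (Function.invFunOn g (UHP \ K)) UHP :=
  h.bijOn.continuousOn_invFunOn h.isOpen fun _ hu huo =>
    h.differentiableOn.isOpen_image_of_injOn h.isOpen h.bijOn.injOn hu huo

lemma norm_le_of_norm_le (h : IsMappingOut K g) {R : ℝ} (hR : ∀ z, R ≤ ‖z‖ → ‖g z - z‖ ≤ 1)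
    {z : ℂ} (hz : z ∈ UHP \ K) (hzR : ‖z‖ ≤ R) : ‖g z‖ ≤ R + 1 := by
  -- `g⁻¹` of the far half-plane is connected, misses the circle `‖z‖ = R` and reaches beyond it
  by_contra! hgz
  set g' := Function.invFunOn g (UHP \ K)
  set B := g' '' {w : ℂ | 0 < w.im ∧ R + 1 < ‖w‖}
  have hB : IsPreconnected B := (isPreconnected_setOf_im_pos_and_lt_norm _).image _
    (h.continuousOn_invFunOn.mono fun w hw => hw.1)
  have hBsub : B ⊆ {z | ‖z‖ < R} ∪ {z | R < ‖z‖} := by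
    rintro _ ⟨w, hw, rfl⟩
    rcases lt_trichotomy ‖g' w‖ R with hlt | heq | hgt
    · exact Or.inl hlt
    · have hgw : g (g' w) = w := h.bijOn.invOn_invFunOn.2 hw.1
      have := hR _ heq.ge
      rw [hgw] at this
      linarith [hw.2, norm_sub_norm_le w (g' w)]
    · exact Or.inr hgt
  have hBfar : (B ∩ {z | R < ‖z‖}).Nonempty := by
    obtain ⟨y, hyΩ, hyR⟩ := ((eventually_ofReal_mul_I_mem_UHP_diff h.isBounded).and
      (tendsto_ofReal_mul_I_cobounded.eventually (eventually_cobounded_le_norm (R + 3)))).exists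
    have := hR _ (by linarith)
    refine ⟨_, ⟨g (y * I), ⟨h.im_pos hyΩ, ?_⟩, h.bijOn.injOn.leftInvOn_invFunOn hyΩ⟩,
      show R < ‖(y : ℂ) * I‖ by linarith⟩
    have := norm_sub_norm_le ((y : ℂ) * I) (g (y * I))
    rw [norm_sub_rev] at this
    linarith
  have hzB : z ∈ B := ⟨g z, ⟨h.im_pos hz, hgz⟩, h.bijOn.injOn.leftInvOn_invFunOn hz⟩
  have := hB.subset_right_of_subset_union (isOpen_lt continuous_norm continuous_const)
    (isOpen_lt continuous_const continuous_norm)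
    (disjoint_left.2 fun _ (h1 : _ < R) (h2 : R < _) => lt_asymm h1 h2)
    hBsub hBfar hzB
  exact (lt_irrefl _ (this.trans_le hzR))

lemma exists_norm_sub_le (h : IsMappingOut K g) : ∃ C, ∀ z ∈ UHP \ K, ‖g z - z‖ ≤ C := by
  obtain ⟨R, -, hR⟩ := hasBasis_cobounded_norm.eventually_iff.1
    (h.tendsto_sub.eventually (closedBall_mem_nhds 0 one_pos))
  have hR : ∀ z, R ≤ ‖z‖ → ‖g z - z‖ ≤ 1 := fun z hz => mem_closedBall_zero_iff.1 (hR hz)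
  refine ⟨max 1 (2 * R + 1), fun z hz => ?_⟩
  rcases le_total R ‖z‖ with hzR | hzR
  · exact (hR z hzR).trans (le_max_left _ _)
  · linarith [norm_sub_le (g z) z, h.norm_le_of_norm_le hR hz hzR, le_max_right 1 (2 * R + 1)]

lemma eventually_im_lt (h : IsMappingOut K g) {p : ℂ} (hp : p ∉ UHP \ K) {ε : ℝ} (hε : 0 < ε) :
    ∀ᶠ z in 𝓝[UHP \ K] p, (g z).im < ε := by
  obtain ⟨C, hC⟩ := h.exists_norm_sub_le
  set L := Function.invFunOn g (UHP \ K) '' ({w | ε ≤ w.im} ∩ closedBall 0 (‖p‖ + 1 + C))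
  -- `L` is a compact subset of the domain, so it stays away from `p`
  have hL : IsCompact L := ((isCompact_closedBall _ _).inter_left
    (isClosed_le continuous_const continuous_im)).image_of_continuousOn
    (h.continuousOn_invFunOn.mono fun w hw => hε.trans_le hw.1)
  have hpL : p ∉ L := by
    rintro ⟨w, hw, hwp⟩
    exact hp (hwp ▸ h.bijOn.surjOn.mapsTo_invFunOn (hε.trans_le hw.1))
  filter_upwards [self_mem_nhdsWithin, nhdsWithin_le_nhds (ball_mem_nhds p one_pos),
    nhdsWithin_le_nhds (hL.isClosed.isOpen_compl.mem_nhds hpL)] with z hzΩ hzp hzL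
  by_contra! hge
  refine hzL ⟨g z, ⟨hge, mem_closedBall_zero_iff.2 ?_⟩, h.bijOn.injOn.leftInvOn_invFunOn hzΩ⟩
  rw [mem_ball, dist_eq_norm] at hzp
  linarith [norm_sub_norm_le (g z) z, norm_sub_norm_le z p, hC z hzΩ]

lemma notMem_of_mem_frontier (h : IsMappingOut K g) {p : ℂ} (hp : p ∈ frontier (UHP \ K)) :
    p ∉ UHP \ K := by
  rw [h.isOpen.frontier_eq] at hp
  exact hp.2

lemma im_le_im (h₁ : IsMappingOut K₁ g₁) (h₂ : IsMappingOut K₂ g₂) (hK : K₁ ⊆ K₂) {z : ℂ}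
    (hz : z ∈ UHP \ K₂) : (g₂ z).im ≤ (g₁ z).im := by
  have hsub : UHP \ K₂ ⊆ UHP \ K₁ := sdiff_subset_sdiff_right hK
  obtain ⟨C₁, hC₁⟩ := h₁.exists_norm_sub_le
  obtain ⟨C₂, hC₂⟩ := h₂.exists_norm_sub_le
  have hF0 : Tendsto (fun z => g₂ z - g₁ z) (cobounded ℂ) (𝓝 0) := by
    simpa using (h₂.tendsto_sub.sub h₁.tendsto_sub)
  have hFC : ∀ z ∈ UHP \ K₂, (g₂ z - g₁ z).im ≤ C₂ + C₁ := fun z hz =>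
    calc (g₂ z - g₁ z).im ≤ ‖(g₂ z - z) - (g₁ z - z)‖ := by
          rw [sub_sub_sub_cancel_right]; exact im_le_norm _
      _ ≤ C₂ + C₁ := (norm_sub_le _ _).trans (add_le_add (hC₂ z hz) (hC₁ z (hsub hz)))
  have hfr : ∀ p ∈ frontier (UHP \ K₂), ∀ ε > 0,
      ∀ᶠ z in 𝓝[UHP \ K₂] p, (g₂ z - g₁ z).im < ε := fun p hp ε hε => by
    filter_upwards [h₂.eventually_im_lt (h₂.notMem_of_mem_frontier hp) hε,
      self_mem_nhdsWithin] with w hw hwΩ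
    rw [sub_im]
    linarith [h₁.im_pos (hsub hwΩ)]
  have := im_nonpos_of_frontier (F := fun z => g₂ z - g₁ z) h₂.isOpen h₂.isPreconnected
    h₂.not_isBounded
    (h₂.differentiableOn.sub (h₁.differentiableOn.mono hsub)) hF0 ⟨_, hFC⟩ hfr hz
  rwa [sub_im, sub_nonpos] at this

lemma hcap_le (h₁ : IsMappingOut K₁ g₁) (h₂ : IsMappingOut K₂ g₂) (hK : K₁ ⊆ K₂) {c₁ c₂ : ℝ}
    (hc₁ : HasHcap g₁ c₁) (hc₂ : HasHcap g₂ c₂) : c₁ ≤ c₂ := by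
  have hu : Tendsto (fun z => z * (g₂ z - g₁ z)) (cobounded ℂ) (𝓝 ((c₂ - c₁ : ℝ) : ℂ)) := by
    push_cast
    exact (hc₂.sub hc₁).congr fun z => by ring
  have := nonneg_of_tendsto_mul_of_im_nonpos hu
    ((eventually_ofReal_mul_I_mem_UHP_diff h₂.isBounded).mono fun y hy => by
      rw [sub_im, sub_nonpos]; exact h₁.im_le_im h₂ hK hy)
  linarith

lemma eventually_im_sub_lt (h₀ : IsMappingOut K₀ g₀) (h₁ : IsMappingOut K₁ g₁) (h₀₁ : K₀ ⊆ K₁)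
    {Ω : Set ℂ} (hΩ : Ω ⊆ UHP \ K₁) (p : ℂ) {ε : ℝ} (hε : 0 < ε) :
    ∀ᶠ z in 𝓝[Ω] p, (g₁ z - g₀ z).im < ε := by
  by_cases hp : p ∈ UHP \ K₁
  · have hcont : ContinuousAt (fun z => (g₁ z - g₀ z).im) p :=
      continuous_im.continuousAt.comp
        ((h₁.differentiableOn.continuousOn.continuousAt (h₁.isOpen.mem_nhds hp)).sub
          (h₀.differentiableOn.continuousOn.continuousAt
            (h₀.isOpen.mem_nhds (sdiff_subset_sdiff_right h₀₁ hp))))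
    have hp' : (g₁ p - g₀ p).im < ε := by
      rw [sub_im]; linarith [h₀.im_le_im h₁ h₀₁ hp]
    exact nhdsWithin_le_nhds (hcont.eventually_lt continuousAt_const hp')
  · filter_upwards [(h₁.eventually_im_lt hp hε).filter_mono (nhdsWithin_mono p hΩ),
      self_mem_nhdsWithin] with z hz hzΩ
    rw [sub_im]
    linarith [h₀.im_pos (sdiff_subset_sdiff_right h₀₁ (hΩ hzΩ))]

lemma eventually_im_add_sub_sub_lt (h : IsMappingOut K g) (h₀ : IsMappingOut K₀ g₀)
    (h₁ : IsMappingOut K₁ g₁) (h₂ : IsMappingOut K₂ g₂) (h₀₂ : K₀ ⊆ K₂) (h₁K : K₁ ⊆ K)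
    (h₂K : K₂ ⊆ K) {p : ℂ} (hp : p ∉ UHP \ K₁) {ε : ℝ} (hε : 0 < ε) :
    ∀ᶠ z in 𝓝[UHP \ K] p, (g₁ z + g₂ z - g₀ z - g z).im < ε := by
  filter_upwards [(h₁.eventually_im_lt hp (half_pos hε)).filter_mono
      (nhdsWithin_mono p (sdiff_subset_sdiff_right h₁K)),
    h₀.eventually_im_sub_lt h₂ h₀₂ (sdiff_subset_sdiff_right h₂K) p (half_pos hε),
    self_mem_nhdsWithin] with z hz₁ hz₂ hzΩ
  simp only [sub_im, add_im] at hz₂ ⊢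
  linarith [h.im_pos hzΩ]

lemma im_add_sub_sub_nonpos (h : IsMappingOut K g) (h₀ : IsMappingOut K₀ g₀)
    (h₁ : IsMappingOut K₁ g₁) (h₂ : IsMappingOut K₂ g₂) (h₀₁ : K₀ ⊆ K₁) (h₀₂ : K₀ ⊆ K₂)
    (h₁K : K₁ ⊆ K) (h₂K : K₂ ⊆ K) (hfr : ∀ p ∈ frontier (UHP \ K), 0 < p.im → p ∈ K₁ ∪ K₂)
    {z : ℂ} (hz : z ∈ UHP \ K) : (g₁ z + g₂ z - g₀ z - g z).im ≤ 0 := by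
  have hsub₁ : UHP \ K ⊆ UHP \ K₁ := sdiff_subset_sdiff_right h₁K
  have hsub₂ : UHP \ K ⊆ UHP \ K₂ := sdiff_subset_sdiff_right h₂K
  have hsub₀ : UHP \ K ⊆ UHP \ K₀ := hsub₁.trans (sdiff_subset_sdiff_right h₀₁)
  obtain ⟨C, hC⟩ := h.exists_norm_sub_le
  obtain ⟨C₀, hC₀⟩ := h₀.exists_norm_sub_le
  obtain ⟨C₁, hC₁⟩ := h₁.exists_norm_sub_le
  obtain ⟨C₂, hC₂⟩ := h₂.exists_norm_sub_le
  have hF0 : Tendsto (fun z => g₁ z + g₂ z - g₀ z - g z) (cobounded ℂ) (𝓝 0) := by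
    simpa using (((h₁.tendsto_sub.add h₂.tendsto_sub).sub h₀.tendsto_sub).sub
      h.tendsto_sub).congr fun z => by ring
  have hFC : ∀ z ∈ UHP \ K, (g₁ z + g₂ z - g₀ z - g z).im ≤ C₁ + C₂ + C₀ + C := by
    intro z hz
    have him : (g₁ z + g₂ z - g₀ z - g z).im =
        (g₁ z - z).im + (g₂ z - z).im - (g₀ z - z).im - (g z - z).im := by
      simp only [sub_im, add_im]; ring
    linarith [im_le_norm (g₁ z - z), im_le_norm (g₂ z - z),
      neg_le_of_abs_le (abs_im_le_norm (g₀ z - z)), neg_le_of_abs_le (abs_im_le_norm (g z - z)),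
      hC z hz, hC₀ z (hsub₀ hz), hC₁ z (hsub₁ hz), hC₂ z (hsub₂ hz)]
  have hfr' : ∀ p ∈ frontier (UHP \ K), ∀ ε > 0,
      ∀ᶠ z in 𝓝[UHP \ K] p, (g₁ z + g₂ z - g₀ z - g z).im < ε := by
    intro p hp ε hε
    have hp' : p ∉ UHP \ K₁ ∨ p ∉ UHP \ K₂ := by
      by_cases him : 0 < p.im
      · exact (hfr p hp him).imp (fun hp₁ hp => hp.2 hp₁) fun hp₂ hp => hp.2 hp₂
      · exact Or.inl fun hp => him hp.1
    rcases hp' with hp₁ | hp₂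
    · exact h.eventually_im_add_sub_sub_lt h₀ h₁ h₂ h₀₂ h₁K h₂K hp₁ hε
    · simpa only [add_comm (g₁ _)] using
        h.eventually_im_add_sub_sub_lt h₀ h₂ h₁ h₀₁ h₂K h₁K hp₂ hε
  exact im_nonpos_of_frontier h.isOpen h.isPreconnected h.not_isBounded
    ((((h₁.differentiableOn.mono hsub₁).add (h₂.differentiableOn.mono hsub₂)).sub
      (h₀.differentiableOn.mono hsub₀)).sub h.differentiableOn) hF0 ⟨_, hFC⟩ hfr' hz

lemma hcap_add_le_add (h : IsMappingOut K g) (h₀ : IsMappingOut K₀ g₀)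
    (h₁ : IsMappingOut K₁ g₁) (h₂ : IsMappingOut K₂ g₂) (h₀₁ : K₀ ⊆ K₁) (h₀₂ : K₀ ⊆ K₂)
    (h₁K : K₁ ⊆ K) (h₂K : K₂ ⊆ K) (hfr : ∀ p ∈ frontier (UHP \ K), 0 < p.im → p ∈ K₁ ∪ K₂)
    {c c₀ c₁ c₂ : ℝ} (hc : HasHcap g c) (hc₀ : HasHcap g₀ c₀) (hc₁ : HasHcap g₁ c₁)
    (hc₂ : HasHcap g₂ c₂) : c + c₀ ≤ c₁ + c₂ := by
  have hu : Tendsto (fun z => z * (g₁ z + g₂ z - g₀ z - g z)) (cobounded ℂ)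
      (𝓝 ((c₁ + c₂ - c₀ - c : ℝ) : ℂ)) := by
    push_cast
    exact (((hc₁.add hc₂).sub hc₀).sub hc).congr fun z => by ring
  have := nonneg_of_tendsto_mul_of_im_nonpos hu
    ((eventually_ofReal_mul_I_mem_UHP_diff h.isBounded).mono fun y hy =>
      h.im_add_sub_sub_nonpos h₀ h₁ h₂ h₀₁ h₀₂ h₁K h₂K hfr hy)
  linarith

end IsMappingOut

lemma IsHullMap.isMappingOut {K E : Set ℂ} {g : ℂ → ℂ} {S : Set ℝ} {z₀ : ℂ}
    (h : IsHullMap K g S) (hΩ : UHP \ K = connectedComponentIn (UHP \ closure E) z₀) :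
    IsMappingOut K g where
  isBounded := h.bounded
  isOpen := hΩ ▸ (isOpen_UHP.sdiff isClosed_closure).connectedComponentIn
  isPreconnected := hΩ ▸ isPreconnected_connectedComponentIn
  differentiableOn := h.holo
  bijOn := h.bij
  tendsto_sub := h.hydro

lemma subset_of_eq_connectedComponentIn {E E' K K' : Set ℂ} {z₀ z₀' : ℂ} (hE : E ⊆ E')
    (hK : K ⊆ UHP) (hKb : IsBounded K) (hK'b : IsBounded K')
    (hΩ : UHP \ K = connectedComponentIn (UHP \ closure E) z₀)
    (hΩ' : UHP \ K' = connectedComponentIn (UHP \ closure E') z₀') : K ⊆ K' := by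
  obtain ⟨y, hyUHP, hyK⟩ := (eventually_ofReal_mul_I_mem_UHP_diff (hKb.union hK'b)).exists
  have hyΩ : (y : ℂ) * I ∈ UHP \ K := ⟨hyUHP, fun h => hyK (Or.inl h)⟩
  have hyΩ' : (y : ℂ) * I ∈ UHP \ K' := ⟨hyUHP, fun h => hyK (Or.inr h)⟩
  -- `UHP \ K'` is a connected part of `UHP \ closure E` meeting its component `UHP \ K`
  have hsub : UHP \ K' ⊆ UHP \ K := by
    have hpre : IsPreconnected (UHP \ K') := hΩ' ▸ isPreconnected_connectedComponentIn
    have hO : UHP \ K' ⊆ UHP \ closure E := by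
      rw [hΩ']
      exact (connectedComponentIn_subset _ _).trans (sdiff_subset_sdiff_right (closure_mono hE))
    rw [hΩ, connectedComponentIn_eq (hΩ ▸ hyΩ)]
    exact hpre.subset_connectedComponentIn hyΩ' hO
  intro z hz
  by_contra hz'
  exact (hsub ⟨hK hz, hz'⟩).2 hz

lemma mem_union_of_mem_frontier {A B K K₁ K₂ : Set ℂ} {z₀ : ℂ}
    (hΩ : UHP \ K = connectedComponentIn (UHP \ closure (A ∪ B)) z₀)
    (hK₁ : ∀ z ∈ closure K₁, 0 < z.im → z ∈ K₁) (hK₂ : ∀ z ∈ closure K₂, 0 < z.im → z ∈ K₂)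
    (hA : A ∩ UHP ⊆ K₁) (hB : B ∩ UHP ⊆ K₂) :
    ∀ p ∈ frontier (UHP \ K), 0 < p.im → p ∈ K₁ ∪ K₂ := by
  intro p hp him
  have hO : IsOpen (UHP \ closure (A ∪ B)) := isOpen_UHP.sdiff isClosed_closure
  have hpE : p ∈ closure (A ∪ B) := by
    by_contra hpE
    -- the component of `p` is a neighbourhood of `p`, so it cannot touch `UHP \ K` without being it
    have hcl : p ∈ closure (connectedComponentIn (UHP \ closure (A ∪ B)) z₀) :=
      hΩ ▸ frontier_subset_closure hp
    obtain ⟨q, hqp, hqz⟩ := mem_closure_iff_nhds.1 hcl _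
      (connectedComponentIn_mem_nhds (hO.mem_nhds ⟨him, hpE⟩))
    have hpΩ : p ∈ UHP \ K := by
      rw [hΩ, connectedComponentIn_eq hqz, ← connectedComponentIn_eq hqp]
      exact mem_connectedComponentIn ⟨him, hpE⟩
    rw [(hΩ ▸ hO.connectedComponentIn : IsOpen (UHP \ K)).frontier_eq] at hp
    exact hp.2 hpΩ
  have hUHP (C : Set ℂ) : p ∈ closure C → p ∈ closure (C ∩ UHP) := fun hpC => by
    simpa only [inter_comm] using isOpen_UHP.inter_closure ⟨him, hpC⟩
  rw [closure_union] at hpE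
  exact hpE.imp (fun hpA => hK₁ p (closure_mono hA (hUHP A hpA)) him)
    fun hpB => hK₂ p (closure_mono hB (hUHP B hpB)) him

lemma abs_sub_le_of_rectangle {m : ℝ → ℝ → ℝ} {I J : Set ℝ} (hJ : 0 ∈ J)
    (hrect : ∀ s ∈ I, ∀ s' ∈ I, ∀ t ∈ J, ∀ t' ∈ J, s ≤ s' → t ≤ t' →
      m s' t' - m s' t - m s t' + m s t ≤ 0)
    (hmono : ∀ t ∈ J, MonotoneOn (fun s => m s t) I) (hm : ∀ s ∈ I, m s 0 = s)
    (hJ₀ : ∀ t ∈ J, 0 ≤ t) : ∀ t ∈ J, ∀ s ∈ I, ∀ s' ∈ I, |m s t - m s' t| ≤ |s - s'| := by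
  intro t ht s hs s' hs'
  wlog hss : s ≤ s' generalizing s s'
  · rw [abs_sub_comm, abs_sub_comm s]
    exact this s' hs' s hs (le_of_not_ge hss)
  have hle := hrect s hs s' hs' 0 hJ t ht hss (hJ₀ t ht)
  rw [hm s hs, hm s' hs'] at hle
  have hst := hmono t ht hs hs' hss
  rw [abs_sub_comm, abs_of_nonneg (sub_nonneg.2 hst), abs_sub_comm,
    abs_of_nonneg (sub_nonneg.2 hss)]
  linarith

theorem stmt_6_general (Tp Tm : ℝ) (hTp : 0 < Tp) (hTm : 0 < Tm)
    (ηp ηm : ℝ → ℂ)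
    (K : ℝ → ℝ → Set ℂ) (g : ℝ → ℝ → ℂ → ℂ) (S : ℝ → ℝ → Set ℝ) (m : ℝ → ℝ → ℝ)
    (hhull : ∀ tp ∈ Set.Ico 0 Tp, ∀ tm ∈ Set.Ico 0 Tm,
      IsHullMap (K tp tm) (g tp tm) (S tp tm))
    (hgen : ∀ tp ∈ Set.Ico 0 Tp, ∀ tm ∈ Set.Ico 0 Tm,
      (ηp '' Set.Icc 0 tp ∪ ηm '' Set.Icc 0 tm) ∩ UHP ⊆ K tp tm ∧
      ¬ IsBounded (UHP \ K tp tm) ∧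
      ∃ z₀ ∈ UHP \ closure (ηp '' Set.Icc 0 tp ∪ ηm '' Set.Icc 0 tm),
        UHP \ K tp tm =
          connectedComponentIn (UHP \ closure (ηp '' Set.Icc 0 tp ∪ ηm '' Set.Icc 0 tm)) z₀)
    (hcap : ∀ tp ∈ Set.Ico 0 Tp, ∀ tm ∈ Set.Ico 0 Tm, HasHcap (g tp tm) (2 * m tp tm))
    (hnormp : ∀ t ∈ Set.Ico 0 Tp, m t 0 = t)
    (hnormm : ∀ t ∈ Set.Ico 0 Tm, m 0 t = t) :
    (∀ tp ∈ Set.Ico 0 Tp, ∀ tp' ∈ Set.Ico 0 Tp, ∀ tm ∈ Set.Ico 0 Tm, ∀ tm' ∈ Set.Ico 0 Tm,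
        tp ≤ tp' → tm ≤ tm' →
        m tp' tm' - m tp' tm - m tp tm' + m tp tm ≤ 0)
    ∧ (∀ tm ∈ Set.Ico 0 Tm, ∀ s ∈ Set.Ico 0 Tp, ∀ t ∈ Set.Ico 0 Tp,
        |m s tm - m t tm| ≤ |s - t|)
    ∧ (∀ tp ∈ Set.Ico 0 Tp, ∀ s ∈ Set.Ico 0 Tm, ∀ t ∈ Set.Ico 0 Tm,
        |m tp s - m tp t| ≤ |s - t|) := by
  have hΩ tp (htp : tp ∈ Ico 0 Tp) tm (htm : tm ∈ Ico 0 Tm) :=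
    (hgen tp htp tm htm).2.2.choose_spec.2
  have hK tp (htp : tp ∈ Ico 0 Tp) tm (htm : tm ∈ Ico 0 Tm) : IsMappingOut (K tp tm) (g tp tm) :=
    (hhull tp htp tm htm).isMappingOut (hΩ tp htp tm htm)
  have hKmono tp (htp : tp ∈ Ico 0 Tp) tp' (htp' : tp' ∈ Ico 0 Tp) tm (htm : tm ∈ Ico 0 Tm) tm'
      (htm' : tm' ∈ Ico 0 Tm) (hp : tp ≤ tp') (hm : tm ≤ tm') : K tp tm ⊆ K tp' tm' :=
    subset_of_eq_connectedComponentIn (union_subset_union (image_mono (Icc_subset_Icc_right hp))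
      (image_mono (Icc_subset_Icc_right hm))) (hhull tp htp tm htm).subset_UHP
      (hK tp htp tm htm).isBounded (hK tp' htp' tm' htm').isBounded (hΩ tp htp tm htm)
      (hΩ tp' htp' tm' htm')
  have hrect tp (htp : tp ∈ Ico 0 Tp) tp' (htp' : tp' ∈ Ico 0 Tp) tm (htm : tm ∈ Ico 0 Tm) tm'
      (htm' : tm' ∈ Ico 0 Tm) (hp : tp ≤ tp') (hm : tm ≤ tm') :
      m tp' tm' - m tp' tm - m tp tm' + m tp tm ≤ 0 := by
    have hfr := mem_union_of_mem_frontier (hΩ tp' htp' tm' htm')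
      (hhull tp' htp' tm htm).relClosed (hhull tp htp tm' htm').relClosed
      ((inter_subset_inter_left _ subset_union_left).trans (hgen tp' htp' tm htm).1)
      ((inter_subset_inter_left _ subset_union_right).trans (hgen tp htp tm' htm').1)
    have := (hK tp' htp' tm' htm').hcap_add_le_add (hK tp htp tm htm) (hK tp' htp' tm htm)
      (hK tp htp tm' htm') (hKmono _ htp _ htp' _ htm _ htm hp le_rfl)
      (hKmono _ htp _ htp _ htm _ htm' le_rfl hm) (hKmono _ htp' _ htp' _ htm _ htm' le_rfl hm)
      (hKmono _ htp _ htp' _ htm' _ htm' hp le_rfl) hfr (hcap _ htp' _ htm') (hcap _ htp _ htm)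
      (hcap _ htp' _ htm) (hcap _ htp _ htm')
    linarith
  have hmono tp (htp : tp ∈ Ico 0 Tp) tp' (htp' : tp' ∈ Ico 0 Tp) tm (htm : tm ∈ Ico 0 Tm) tm'
      (htm' : tm' ∈ Ico 0 Tm) (hp : tp ≤ tp') (hm : tm ≤ tm') : m tp tm ≤ m tp' tm' := by
    have := (hK tp htp tm htm).hcap_le (hK tp' htp' tm' htm')
      (hKmono _ htp _ htp' _ htm _ htm' hp hm) (hcap _ htp _ htm) (hcap _ htp' _ htm')
    linarith
  refine ⟨hrect, ?_, ?_⟩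
  · exact abs_sub_le_of_rectangle ⟨le_rfl, hTm⟩ hrect
      (fun tm htm s hs t ht hst => hmono s hs t ht tm htm tm htm hst le_rfl) hnormp
      fun t ht => ht.1
  · exact abs_sub_le_of_rectangle (m := fun s t => m t s) ⟨le_rfl, hTp⟩
      (fun s hs s' hs' t ht t' ht' hss htt => by linarith [hrect t ht t' ht' s hs s' hs' htt hss])
      (fun tp htp s hs t ht hst => hmono tp htp tp htp s hs t ht le_rfl hst) hnormm
      fun t ht => ht.1

/-- **Concavity of the two-curve capacity function.** For two chordal Loewner curves `ηp, ηm`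
in `ℍ` started from `wp > wm` with `ηp` avoiding `(-∞, wm]` and `ηm` avoiding `[wp, ∞)`, the
capacity function `m(tp, tm) = hcap₂(Hull(ηp[0,tp] ∪ ηm[0,tm]))` satisfies the rectangle
inequality `m(tp',tm') - m(tp',tm) - m(tp,tm') + m(tp,tm) ≤ 0`, and consequently `m` is
`1`-Lipschitz in each variable. -/
theorem stmt_6 (wp wm : ℝ) (hw : wm < wp) (Tp Tm : ℝ) (hTp : 0 < Tp) (hTm : 0 < Tm)
    (ηp ηm : ℝ → ℂ)
    (hcp : ContinuousOn ηp (Set.Ico 0 Tp)) (hcm : ContinuousOn ηm (Set.Ico 0 Tm))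
    (h0p : ηp 0 = (wp : ℂ)) (h0m : ηm 0 = (wm : ℂ))
    (himp : ∀ t ∈ Set.Ico 0 Tp, 0 ≤ (ηp t).im)
    (himm : ∀ t ∈ Set.Ico 0 Tm, 0 ≤ (ηm t).im)
    (havoidp : ∀ t ∈ Set.Ico 0 Tp, ¬((ηp t).im = 0 ∧ (ηp t).re ≤ wm))
    (havoidm : ∀ t ∈ Set.Ico 0 Tm, ¬((ηm t).im = 0 ∧ wp ≤ (ηm t).re))
    (K : ℝ → ℝ → Set ℂ) (g : ℝ → ℝ → ℂ → ℂ) (S : ℝ → ℝ → Set ℝ) (m : ℝ → ℝ → ℝ)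
    (hhull : ∀ tp ∈ Set.Ico 0 Tp, ∀ tm ∈ Set.Ico 0 Tm,
      IsHullMap (K tp tm) (g tp tm) (S tp tm))
    (hgen : ∀ tp ∈ Set.Ico 0 Tp, ∀ tm ∈ Set.Ico 0 Tm,
      (ηp '' Set.Icc 0 tp ∪ ηm '' Set.Icc 0 tm) ∩ UHP ⊆ K tp tm ∧
      ¬ IsBounded (UHP \ K tp tm) ∧
      ∃ z₀ ∈ UHP \ closure (ηp '' Set.Icc 0 tp ∪ ηm '' Set.Icc 0 tm),
        UHP \ K tp tm =
          connectedComponentIn (UHP \ closure (ηp '' Set.Icc 0 tp ∪ ηm '' Set.Icc 0 tm)) z₀)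
    (hcap : ∀ tp ∈ Set.Ico 0 Tp, ∀ tm ∈ Set.Ico 0 Tm, HasHcap (g tp tm) (2 * m tp tm))
    (hnormp : ∀ t ∈ Set.Ico 0 Tp, m t 0 = t)
    (hnormm : ∀ t ∈ Set.Ico 0 Tm, m 0 t = t) :
    (∀ tp ∈ Set.Ico 0 Tp, ∀ tp' ∈ Set.Ico 0 Tp, ∀ tm ∈ Set.Ico 0 Tm, ∀ tm' ∈ Set.Ico 0 Tm,
        tp ≤ tp' → tm ≤ tm' →
        m tp' tm' - m tp' tm - m tp tm' + m tp tm ≤ 0)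
    ∧ (∀ tm ∈ Set.Ico 0 Tm, ∀ s ∈ Set.Ico 0 Tp, ∀ t ∈ Set.Ico 0 Tp,
        |m s tm - m t tm| ≤ |s - t|)
    ∧ (∀ tp ∈ Set.Ico 0 Tp, ∀ s ∈ Set.Ico 0 Tm, ∀ t ∈ Set.Ico 0 Tm,
        |m tp s - m tp t| ≤ |s - t|) :=
  stmt_6_general Tp Tm hTp hTm ηp ηm K g S m hhull hgen hcap hnormp hnormm
end
end

section
/- Let (K_t)_{0≤t<T} be chordal Loewner hulls driven by a continuous function ŵ with some speed. Then for every t₀ ∈ (0,T), the driving function satisfies c_{K_{t₀}} ≤ ŵ(t) ≤ d_{K_{t₀}} for all t ∈ [0, t₀]. -/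
/-!
For `0 < s < t₀` the driving point `ŵ(s)` lies in `cl g_s(K_{t₀} \ K_s) ∩ ℝ`. On `ℝ` the boundary
map of a hull `K` is continuous, injective and `x + o(1)` at `±∞`, so it increases on the rays
`(-∞, a_K)` and `(b_K, ∞)` and maps them onto the parts of `ℝ \ S_K` below `c_K` and above `d_K`.
For `L ⊆ K` the maximum principle gives `Im g_K ≤ Im g_L` on `ℍ \ K`; as both vanish on the real
axis, `g_L - g_K` has nonnegative derivative there and tends to `0` at `±∞`, so `g_K ≤ g_L` left
of `a_K` and `g_K ≥ g_L` right of `b_K`. If `ŵ(s) ∈ S_{K_s}` this gives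
`c_{K_{t₀}} ≤ ŵ(s) ≤ d_{K_{t₀}}` directly. Otherwise `ŵ(s) = g_s(x₀)` with `x₀` real, and since
`g_s` is an injective open map, `x₀ ∈ cl(K_{t₀} \ K_s) ⊆ [a_{K_{t₀}}, b_{K_{t₀}}]`; monotonicity
of `g_s` on the rays gives the same bounds. Continuity of `ŵ` extends them to `s = 0` and `s = t₀`.
-/

open Complex Filter Set Metric Bornology Topology

noncomputable section

open ComplexConjugate

theorem lt_or_gt_of_notMem_Icc {α : Type*} [LinearOrder α] {a b x : α} (hx : x ∉ Icc a b) :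
    x < a ∨ b < x := by
  rw [mem_Icc, not_and_or, not_le, not_le] at hx
  exact hx

section Rays

variable {α δ : Type*} [ConditionallyCompleteLinearOrder α] [TopologicalSpace α] [OrderTopology α]
  [DenselyOrdered α] [LinearOrder δ] [TopologicalSpace δ] [OrderClosedTopology δ] {f : α → δ}

theorem strictMonoOn_Ioi_of_injOn {b : α} (hc : ContinuousOn f (Ioi b)) (hi : InjOn f (Ioi b))
    (ht : Tendsto f atTop atTop) : StrictMonoOn f (Ioi b) := by
  intro x hx y hy hxy
  obtain ⟨M, hyM, hM⟩ := ((eventually_ge_atTop y).and (ht.eventually_ge_atTop (f x))).exists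
  have hxM : x ≤ M := hxy.le.trans hyM
  have hsub : Icc x M ⊆ Ioi b := fun t ht => lt_of_lt_of_le hx ht.1
  rcases (hc.mono hsub).strictMonoOn_of_injOn_Icc' hxM (hi.mono hsub) with hmono | hanti
  · exact hmono (left_mem_Icc.2 hxM) ⟨hxy.le, hyM⟩ hxy
  · exact absurd hM (hanti (left_mem_Icc.2 hxM) (right_mem_Icc.2 hxM) (hxy.trans_le hyM)).not_ge

theorem strictMonoOn_Iio_of_injOn {a : α} (hc : ContinuousOn f (Iio a)) (hi : InjOn f (Iio a))
    (ht : Tendsto f atBot atBot) : StrictMonoOn f (Iio a) :=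
  (strictMonoOn_Ioi_of_injOn (α := αᵒᵈ) (δ := δᵒᵈ) hc hi ht).dual

theorem le_apply_of_notMem_image_Ioi {b x : α} {y : δ} (hc : ContinuousOn f (Ioi b))
    (ht : Tendsto f atTop atTop) (hy : y ∉ f '' Ioi b) (hx : b < x) : y ≤ f x := by
  by_contra! hlt
  obtain ⟨u, hxu, hyu⟩ := ((eventually_ge_atTop x).and (ht.eventually_ge_atTop y)).exists
  have hsub : Icc x u ⊆ Ioi b := fun t ht => lt_of_lt_of_le hx ht.1
  obtain ⟨t, ht, rfl⟩ := intermediate_value_Icc hxu (hc.mono hsub) ⟨hlt.le, hyu⟩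
  exact hy ⟨t, hsub ht, rfl⟩

theorem apply_le_of_notMem_image_Iio {a x : α} {y : δ} (hc : ContinuousOn f (Iio a))
    (ht : Tendsto f atBot atBot) (hy : y ∉ f '' Iio a) (hx : x < a) : f x ≤ y :=
  le_apply_of_notMem_image_Ioi (α := αᵒᵈ) (δ := δᵒᵈ) hc ht hy hx

end Rays

section OpenMapping

variable {X Y : Type*} [TopologicalSpace X] [TopologicalSpace Y] [Nonempty X] {f : X → Y}
  {U : Set X}

theorem continuousOn_invFunOn_image (hU : IsOpen U) (hinj : InjOn f U)
    (hf : ∀ z ∈ U, 𝓝 (f z) ≤ map f (𝓝 z)) : ContinuousOn (Function.invFunOn f U) (f '' U) := by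
  rintro _ ⟨z, hz, rfl⟩ V hV
  rw [hinj.leftInvOn_invFunOn hz] at hV
  refine mem_nhdsWithin_of_mem_nhds (mem_of_superset
    (hf z hz (image_mem_map (inter_mem hV (hU.mem_nhds hz)))) ?_)
  rintro _ ⟨z', hz', rfl⟩
  rw [mem_preimage, hinj.leftInvOn_invFunOn hz'.2]
  exact hz'.1

theorem mem_closure_of_mem_closure_image (hU : IsOpen U) (hinj : InjOn f U)
    (hf : ∀ z ∈ U, 𝓝 (f z) ≤ map f (𝓝 z)) {A : Set X} (hA : A ⊆ U) {z : X} (hz : z ∈ U)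
    (h : f z ∈ closure (f '' A)) : z ∈ closure A := by
  have hcont := continuousOn_invFunOn_image hU hinj hf (f z) (mem_image_of_mem f hz)
  have := (hcont.mono (image_mono hA)).mem_closure_image h
  rwa [hinj.invFunOn_image hA, hinj.leftInvOn_invFunOn hz] at this

end OpenMapping

theorem DifferentiableOn.nhds_le_map_of_injOn {f : ℂ → ℂ} {U : Set ℂ}
    (hf : DifferentiableOn ℂ f U) (hU : IsOpen U) (hinj : InjOn f U) {z : ℂ} (hz : z ∈ U) :
    𝓝 (f z) ≤ map f (𝓝 z) := by
  refine (hf.analyticAt (hU.mem_nhds hz)).eventually_constant_or_nhds_le_map_nhds.resolve_left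
    fun hconst => ?_
  obtain ⟨w, ⟨hfw, hwU⟩, hwz⟩ := (((hconst.and (hU.mem_nhds hz)).filter_mono
    nhdsWithin_le_nhds).and (eventually_mem_nhdsWithin (s := {z}ᶜ))).exists
  exact hwz (hinj hwU hz hfw)

/-- Apply the maximum principle for `exp ∘ Φ` on the bounded open set where `η < Re Φ`. -/
theorem re_le_of_eventually_re_le {U : Set ℂ} (hU : IsOpen U) {Φ : ℂ → ℂ}
    (hΦ : DifferentiableOn ℂ Φ U) {η : ℝ} (hinf : ∀ᶠ z in cobounded ℂ, z ∈ U → (Φ z).re ≤ η)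
    (hfr : ∀ x ∈ frontier U, ∀ᶠ z in 𝓝[U] x, (Φ z).re ≤ η) {z : ℂ} (hz : z ∈ U) :
    (Φ z).re ≤ η := by
  set W := U ∩ (fun z => (Φ z).re) ⁻¹' Ioi η
  have hWopen : IsOpen W :=
    (continuous_re.comp_continuousOn hΦ.continuousOn).isOpen_inter_preimage hU isOpen_Ioi
  have hWbdd : IsBounded W := by
    obtain ⟨R, -, hR⟩ := hasBasis_cobounded_norm.eventually_iff.mp hinf
    refine (isBounded_closedBall (x := 0) (r := R)).subset fun w hw => mem_closedBall_zero_iff.2 ?_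
    by_contra! hRw
    exact (hR hRw.le hw.1).not_gt hw.2
  have hclW : closure W ⊆ U := by
    intro x hx
    rcases (closure_eq_self_union_frontier U ▸ closure_mono inter_subset_left hx) with hxU | hxfr
    · exact hxU
    · have := mem_closure_iff_nhdsWithin_neBot.mp hx
      obtain ⟨w, hwη, hwW⟩ := (((hfr x hxfr).filter_mono (nhdsWithin_mono x inter_subset_left)).and
        (eventually_mem_nhdsWithin (s := W))).exists
      exact (hwη.not_gt hwW.2).elim
  have hexp : ∀ w ∈ closure W, ‖cexp (Φ w)‖ ≤ Real.exp η := by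
    refine fun w => Complex.norm_le_of_forall_mem_frontier_norm_le hWbdd
      ⟨(hΦ.mono inter_subset_left).cexp, (hΦ.continuousOn.mono hclW).cexp⟩ fun w hw => ?_
    rw [Complex.norm_exp, Real.exp_le_exp]
    by_contra! hlt
    rw [hWopen.frontier_eq] at hw
    exact hw.2 ⟨hclW hw.1, hlt⟩
  by_contra! hlt
  have := hexp z (subset_closure ⟨hz, hlt⟩)
  rw [Complex.norm_exp, Real.exp_le_exp] at this
  exact this.not_gt hlt

theorem exists_eq_of_norm_sub_self_le {f : ℂ → ℂ} {w : ℂ}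
    (hf : DifferentiableOn ℂ f (closedBall w 2))
    (hsmall : ∀ z ∈ closedBall w 2, ‖f z - z‖ ≤ 1 / 8) :
    ∃ z ∈ closedBall w 1, f z = w := by
  set q : ℂ → ℂ := fun z => f z - z
  have hq : DifferentiableOn ℂ q (closedBall w 2) := hf.sub differentiableOn_id
  have hball : ∀ z ∈ closedBall w 1, closedBall z (1 / 2) ⊆ closedBall w 2 := fun z hz =>
    closedBall_subset_closedBall' (by rw [mem_closedBall] at hz; linarith)
  -- Cauchy's estimate makes `q` a `1/4`-Lipschitz perturbation of the identity on `closedBall w 1`.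
  have hderiv : ∀ z ∈ closedBall w 1, ‖deriv q z‖ ≤ 1 / 4 := fun z hz => by
    have := Complex.norm_deriv_le_of_forall_mem_sphere_norm_le (by norm_num)
      (hq.diffContOnCl_ball (hball z hz)) fun ζ hζ =>
        hsmall ζ (hball z hz (sphere_subset_closedBall hζ))
    linarith
  have hdiff : ∀ z ∈ closedBall w 1, DifferentiableAt ℂ q z := fun z hz =>
    hq.differentiableAt (closedBall_mem_nhds_of_mem <|
      by rw [mem_closedBall] at hz; rw [mem_ball]; linarith)
  have happrox : ApproximatesLinearOn f (ContinuousLinearEquiv.refl ℂ ℂ : ℂ →L[ℂ] ℂ)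
      (closedBall w 1) (1 / 4) := fun x hx y hy => by
    have := (convex_closedBall w 1).norm_image_sub_le_of_norm_deriv_le hdiff hderiv hy hx
    simp only [q] at this
    convert this using 2
    · simp only [ContinuousLinearEquiv.coe_coe, ContinuousLinearEquiv.refl_apply]; ring
    · norm_num
  have hnorm : ((ContinuousLinearEquiv.refl ℂ ℂ).toNonlinearRightInverse.nnnorm : ℝ) = 1 := by
    simp [ContinuousLinearEquiv.toNonlinearRightInverse]
  refine happrox.surjOn_closedBall_of_nonlinearRightInverse
    (ContinuousLinearEquiv.refl ℂ ℂ).toNonlinearRightInverse zero_le_one subset_rfl ?_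
  rw [hnorm, mem_closedBall, dist_comm, dist_eq_norm]
  have := hsmall w (mem_closedBall_self (by norm_num))
  norm_num
  linarith

theorem re_nonneg_of_hasDerivAt_of_im_nonneg {Q : ℂ → ℂ} {Q' : ℂ} {x : ℝ}
    (hQ : HasDerivAt Q Q' x) (hx : (Q x).im = 0)
    (hup : ∀ᶠ y : ℝ in 𝓝[>] 0, 0 ≤ (Q (x + y * I)).im) : 0 ≤ Q'.re := by
  have hline : HasDerivAt (fun w : ℂ => (x : ℂ) + w * I) I ((0 : ℝ) : ℂ) := by
    simpa using ((hasDerivAt_id ((0 : ℝ) : ℂ)).mul_const I).const_add (x : ℂ)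
  have hvert : HasDerivAt (fun y : ℝ => (-I * Q (x + y * I)).re) Q'.re 0 := by
    have := ((hQ.comp_of_eq ((0 : ℝ) : ℂ) hline (by simp)).const_mul (-I)).real_of_complex
    rwa [show -I * (Q' * I) = Q' by linear_combination (-Q') * I_sq] at this
  have hmin : IsLocalMinOn (fun y : ℝ => (-I * Q (x + y * I)).re) (Ioi 0) 0 := by
    filter_upwards [hup] with y hy
    simpa [hx] using hy
  simpa using hmin.hasFDerivWithinAt_nonneg hvert.hasDerivWithinAt.hasFDerivWithinAt
    (one_mem_posTangentConeAt_iff_frequently.2 (Eventually.frequently self_mem_nhdsWithin))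

/-- The domain `ℂ \ (K^doub ∪ [a_K, b_K])` of the Schwarz reflection of `g_K`. -/
def extDomain (K : Set ℂ) : Set ℂ := {z : ℂ | z ∉ Kdoub K ∧ z ∉ seg K}

def realTrace (K : Set ℂ) : Set ℝ := {x : ℝ | (x : ℂ) ∈ closure K}

def realRestrict (g : ℂ → ℂ) (x : ℝ) : ℝ := (g x).re

section Hull

variable {K : Set ℂ}

theorem mem_Kdoub_iff {z : ℂ} : z ∈ Kdoub K ↔ z ∈ closure K ∨ conj z ∈ closure K := by
  refine or_congr Iff.rfl ⟨?_, fun h => ⟨conj z, h, conj_conj z⟩⟩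
  rintro ⟨y, hy, rfl⟩
  rwa [conj_conj]

theorem ofReal_mem_Kdoub_iff {x : ℝ} : (x : ℂ) ∈ Kdoub K ↔ x ∈ realTrace K := by
  simp [mem_Kdoub_iff, realTrace]

theorem Kdoub_mono {L : Set ℂ} (h : L ⊆ K) : Kdoub L ⊆ Kdoub K :=
  union_subset_union (closure_mono h) (image_mono (closure_mono h))

theorem realTrace_mono {L : Set ℂ} (h : L ⊆ K) : realTrace L ⊆ realTrace K :=
  fun _ hx => closure_mono h hx

theorem extDomain_eq_compl : extDomain K = (Kdoub K ∪ seg K)ᶜ := by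
  ext z
  simp [extDomain]

variable (hK : IsBounded K)
include hK

theorem isCompact_Kdoub : IsCompact (Kdoub K) :=
  hK.isCompact_closure.union (hK.isCompact_closure.image continuous_conj)

theorem isBounded_realTrace : IsBounded (realTrace K) := by
  obtain ⟨C, hC⟩ := hK.closure.subset_closedBall 0
  refine (isBounded_closedBall (x := (0 : ℝ)) (r := C)).subset fun x hx => ?_
  simpa using hC hx

theorem realTrace_subset_Icc : realTrace K ⊆ Icc (aK K) (bK K) := fun _ hx =>
  ⟨csInf_le (isBounded_realTrace hK).bddBelow hx, le_csSup (isBounded_realTrace hK).bddAbove hx⟩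

theorem aK_le_bK : aK K ≤ bK K := by
  change sInf (realTrace K) ≤ sSup (realTrace K)
  rcases (realTrace K).eq_empty_or_nonempty with h | h
  · simp [h]
  · exact csInf_le_csSup h (isBounded_realTrace hK).bddBelow (isBounded_realTrace hK).bddAbove

theorem isCompact_Kdoub_union_seg : IsCompact (Kdoub K ∪ seg K) :=
  (isCompact_Kdoub hK).union (isCompact_Icc.image continuous_ofReal)

theorem isOpen_extDomain : IsOpen (extDomain K) := by
  rw [extDomain_eq_compl]
  exact (isCompact_Kdoub_union_seg hK).isClosed.isOpen_compl

theorem ofReal_mem_extDomain_iff {x : ℝ} : (x : ℂ) ∈ extDomain K ↔ x ∉ Icc (aK K) (bK K) := by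
  have hseg : (x : ℂ) ∈ seg K ↔ x ∈ Icc (aK K) (bK K) := by simp [seg]
  rw [extDomain, mem_ofPred_eq, ofReal_mem_Kdoub_iff, hseg]
  exact ⟨And.right, fun h => ⟨fun hx => h (realTrace_subset_Icc hK hx), h⟩⟩

end Hull

namespace IsHullMap

section SingleHull

variable {K : Set ℂ} {g : ℂ → ℂ} {S : Set ℝ} (H : IsHullMap K g S)
include H

theorem diff_eq_inter_compl_closure : UHP \ K = UHP ∩ (closure K)ᶜ := by
  ext z
  exact ⟨fun hz => ⟨hz.1, fun hc => hz.2 (H.relClosed z hc hz.1)⟩,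
    fun hz => ⟨hz.1, fun hc => hz.2 (subset_closure hc)⟩⟩

theorem isOpen_diff : IsOpen (UHP \ K) := by
  rw [H.diff_eq_inter_compl_closure]
  exact (isOpen_lt continuous_const continuous_im).inter isClosed_closure.isOpen_compl

theorem diff_subset_extDomain : UHP \ K ⊆ extDomain K := by
  intro z hz
  rw [H.diff_eq_inter_compl_closure] at hz
  have hcl : closure K ⊆ {w : ℂ | 0 ≤ w.im} :=
    closure_minimal (fun w hw => (show (0 : ℝ) < w.im from H.subset_UHP hw).le)
      (isClosed_le continuous_const continuous_im)
  have him : 0 < z.im := hz.1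
  refine ⟨fun hK => (mem_Kdoub_iff.1 hK).elim hz.2 fun hc => ?_, fun hs => ?_⟩
  · have : 0 ≤ -z.im := by simpa using hcl hc
    linarith
  · obtain ⟨x, -, rfl⟩ := hs
    simp at him

theorem im_pos {z : ℂ} (hz : z ∈ UHP \ K) : 0 < (g z).im := H.bij.mapsTo hz

theorem tendsto_realRestrict_sub_atTop : Tendsto (fun x => realRestrict g x - x) atTop (𝓝 0) := by
  simpa [realRestrict, Function.comp_def] using
    (continuous_re.tendsto 0).comp (H.hydro.comp (RCLike.tendsto_ofReal_atTop_cobounded ℂ))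

theorem tendsto_realRestrict_sub_atBot : Tendsto (fun x => realRestrict g x - x) atBot (𝓝 0) := by
  simpa [realRestrict, Function.comp_def] using
    (continuous_re.tendsto 0).comp (H.hydro.comp (RCLike.tendsto_ofReal_atBot_cobounded ℂ))

theorem tendsto_realRestrict_atTop : Tendsto (realRestrict g) atTop atTop := by
  simpa using tendsto_id.atTop_add H.tendsto_realRestrict_sub_atTop

theorem tendsto_realRestrict_atBot : Tendsto (realRestrict g) atBot atBot := by
  simpa using tendsto_id.atBot_add H.tendsto_realRestrict_sub_atBot

variable (hne : K.Nonempty)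
include hne

theorem ofReal_apply {x : ℝ} (hx : x ∉ Icc (aK K) (bK K)) : g x = realRestrict g x := by
  have hx' : (x : ℂ) ∉ Kdoub K := ((ofReal_mem_extDomain_iff H.bounded).2 hx).1
  apply Complex.ext <;> simp [realRestrict, H.real_vals hne x hx']

theorem im_eq_zero_of_im_apply_eq_zero {z : ℂ} (hz : z ∈ extDomain K) (h : (g z).im = 0) :
    z.im = 0 := by
  have hzK : z ∉ K := fun hK => hz.1 (Or.inl (subset_closure hK))
  rcases lt_trichotomy z.im 0 with hlt | heq | hgt
  · have hconj : conj z ∈ UHP \ K := by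
      refine ⟨by simpa [UHP] using hlt, fun hK => hz.1 (mem_Kdoub_iff.2 (Or.inr ?_))⟩
      exact subset_closure hK
    have := H.im_pos hconj
    rw [H.conj_symm hne z hz.1, conj_im, h] at this
    simp at this
  · exact heq
  · exact absurd h (H.im_pos ⟨hgt, hzK⟩).ne'

theorem realRestrict_notMem {x : ℝ} (hx : x ∉ Icc (aK K) (bK K)) : realRestrict g x ∉ S :=
  fun hS => (H.extBij hne).mapsTo ((ofReal_mem_extDomain_iff H.bounded).2 hx) _ hS
    (H.ofReal_apply hne hx)

theorem exists_realRestrict_eq {y : ℝ} (hy : y ∉ S) :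
    ∃ x ∉ Icc (aK K) (bK K), realRestrict g x = y := by
  obtain ⟨z, hz, hgz⟩ := (H.extBij hne).surjOn (show (y : ℂ) ∈ {w : ℂ | ∀ s ∈ S, w ≠ s} from
    fun s hs h => hy (by rwa [ofReal_inj.1 h]))
  have hz' : (z.re : ℂ) = z := Complex.ext rfl
    (by simp [H.im_eq_zero_of_im_apply_eq_zero hne hz (by simp [hgz])])
  refine ⟨z.re, (ofReal_mem_extDomain_iff H.bounded).1 (hz' ▸ hz), ?_⟩
  simp [realRestrict, hz', hgz]

theorem injOn_realRestrict : InjOn (realRestrict g) (Icc (aK K) (bK K))ᶜ := by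
  intro x hx y hy hxy
  have h := (H.extBij hne).injOn ((ofReal_mem_extDomain_iff H.bounded).2 hx)
    ((ofReal_mem_extDomain_iff H.bounded).2 hy)
    (by rw [H.ofReal_apply hne hx, H.ofReal_apply hne hy, hxy])
  exact_mod_cast h

theorem continuousOn_realRestrict : ContinuousOn (realRestrict g) (Icc (aK K) (bK K))ᶜ := by
  intro x hx
  have hx' : (x : ℂ) ∈ (Kdoub K)ᶜ := ((ofReal_mem_extDomain_iff H.bounded).2 hx).1
  exact (continuous_re.continuousAt.comp ((H.ext_holo hne).continuousOn.continuousAt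
    ((isCompact_Kdoub H.bounded).isClosed.isOpen_compl.mem_nhds hx')
    |>.comp continuous_ofReal.continuousAt)).continuousWithinAt

theorem strictMonoOn_Iio : StrictMonoOn (realRestrict g) (Iio (aK K)) :=
  have hsub : Iio (aK K) ⊆ (Icc (aK K) (bK K))ᶜ := fun _ hx => notMem_Icc_of_lt hx
  strictMonoOn_Iio_of_injOn ((H.continuousOn_realRestrict hne).mono hsub)
    ((H.injOn_realRestrict hne).mono hsub) H.tendsto_realRestrict_atBot

theorem strictMonoOn_Ioi : StrictMonoOn (realRestrict g) (Ioi (bK K)) :=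
  have hsub : Ioi (bK K) ⊆ (Icc (aK K) (bK K))ᶜ := fun _ hx => notMem_Icc_of_gt hx
  strictMonoOn_Ioi_of_injOn ((H.continuousOn_realRestrict hne).mono hsub)
    ((H.injOn_realRestrict hne).mono hsub) H.tendsto_realRestrict_atTop

theorem realRestrict_le_of_notMem_image {x y : ℝ} (hy : y ∉ realRestrict g '' Iio (aK K))
    (hx : x < aK K) : realRestrict g x ≤ y :=
  apply_le_of_notMem_image_Iio ((H.continuousOn_realRestrict hne).mono
    fun _ => notMem_Icc_of_lt) H.tendsto_realRestrict_atBot hy hx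

theorem le_realRestrict_of_notMem_image {x y : ℝ} (hy : y ∉ realRestrict g '' Ioi (bK K))
    (hx : bK K < x) : y ≤ realRestrict g x :=
  le_apply_of_notMem_image_Ioi ((H.continuousOn_realRestrict hne).mono
    fun _ => notMem_Icc_of_gt) H.tendsto_realRestrict_atTop hy hx

theorem realRestrict_le_of_mem {x s : ℝ} (hs : s ∈ S) (hx : x < aK K) : realRestrict g x ≤ s :=
  H.realRestrict_le_of_notMem_image hne (fun ⟨_, hx', h⟩ =>
    H.realRestrict_notMem hne (notMem_Icc_of_lt hx') (h ▸ hs)) hx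

theorem le_realRestrict_of_mem {x s : ℝ} (hs : s ∈ S) (hx : bK K < x) : s ≤ realRestrict g x :=
  H.le_realRestrict_of_notMem_image hne (fun ⟨_, hx', h⟩ =>
    H.realRestrict_notMem hne (notMem_Icc_of_gt hx') (h ▸ hs)) hx

theorem realRestrict_notMem_image_Iio_of_bK_lt {x : ℝ} (hx : bK K < x) :
    realRestrict g x ∉ realRestrict g '' Iio (aK K) := fun ⟨_, hx', h⟩ =>
  (hx'.trans ((aK_le_bK H.bounded).trans_lt hx)).ne
    (H.injOn_realRestrict hne (notMem_Icc_of_lt hx') (notMem_Icc_of_gt hx) h)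

/-- `sup g_K((-∞, a_K))` lies in `S_K`: it is a value of `g_K` on neither ray. -/
theorem nonempty_S : S.Nonempty := by
  set L := realRestrict g '' Iio (aK K)
  have hbdd : BddAbove L := ⟨_, forall_mem_image.2 fun _ hx =>
    H.realRestrict_le_of_notMem_image hne (H.realRestrict_notMem_image_Iio_of_bK_lt hne
      (lt_add_one (bK K))) hx⟩
  have hLne : L.Nonempty := ⟨_, aK K - 1, show aK K - 1 < aK K by linarith, rfl⟩
  by_contra hS
  obtain ⟨x₀, hx₀, hfx₀⟩ := H.exists_realRestrict_eq hne fun h => hS ⟨sSup L, h⟩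
  rcases lt_or_gt_of_notMem_Icc hx₀ with hx₀ | hx₀
  · have hx' : (x₀ + aK K) / 2 < aK K := by linarith
    have := H.strictMonoOn_Iio hne hx₀ hx' (by linarith)
    linarith [le_csSup hbdd (mem_image_of_mem _ hx')]
  · have hx' : bK K < (x₀ + bK K) / 2 := by linarith
    have := H.strictMonoOn_Ioi hne hx' hx₀ (by linarith)
    have := csSup_le hLne (forall_mem_image.2 fun _ hx =>
      H.realRestrict_le_of_notMem_image hne (H.realRestrict_notMem_image_Iio_of_bK_lt hne hx') hx)
    linarith

theorem sInf_le_of_forall {w : ℝ} (hw : ∀ x < aK K, realRestrict g x ≤ w) : sInf S ≤ w := by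
  have hbdd := H.compactS.bddBelow
  by_contra! hlt
  have hyS : (w + sInf S) / 2 ∉ S := fun hy => (csInf_le hbdd hy).not_gt (by linarith)
  obtain ⟨x₀, hx₀, hfx₀⟩ := H.exists_realRestrict_eq hne hyS
  rcases lt_or_gt_of_notMem_Icc hx₀ with hx₀ | hx₀
  · linarith [hw x₀ hx₀]
  · obtain ⟨s, hs⟩ := H.nonempty_S hne
    linarith [H.le_realRestrict_of_mem hne hs hx₀, csInf_le hbdd hs]

theorem le_sSup_of_forall {w : ℝ} (hw : ∀ x, bK K < x → w ≤ realRestrict g x) : w ≤ sSup S := by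
  have hbdd := H.compactS.bddAbove
  by_contra! hlt
  have hyS : (w + sSup S) / 2 ∉ S := fun hy => (le_csSup hbdd hy).not_gt (by linarith)
  obtain ⟨x₀, hx₀, hfx₀⟩ := H.exists_realRestrict_eq hne hyS
  rcases lt_or_gt_of_notMem_Icc hx₀ with hx₀ | hx₀
  · obtain ⟨s, hs⟩ := H.nonempty_S hne
    linarith [H.realRestrict_le_of_mem hne hs hx₀, le_csSup hbdd hs]
  · linarith [hw x₀ hx₀]

theorem nhds_le_map {z : ℂ} (hz : z ∈ extDomain K) : 𝓝 (g z) ≤ map g (𝓝 z) :=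
  ((H.ext_holo hne).mono fun _ hz => hz.1).nhds_le_map_of_injOn (isOpen_extDomain H.bounded)
    (H.extBij hne).injOn hz

theorem exists_apply_eq_of_le_norm :
    ∃ R, ∀ w : ℂ, R ≤ ‖w‖ → ∃ z ∈ extDomain K, dist z w ≤ 1 ∧ g z = w := by
  obtain ⟨R₁, hR₁⟩ := (isCompact_Kdoub_union_seg H.bounded).isBounded.subset_closedBall 0
  obtain ⟨R₂, -, hR₂⟩ := hasBasis_cobounded_norm.eventually_iff.mp
    (H.hydro.eventually (closedBall_mem_nhds 0 (by norm_num : (0 : ℝ) < 1 / 8)))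
  refine ⟨max R₁ R₂ + 3, fun w hw => ?_⟩
  have hfar : ∀ z ∈ closedBall w 2, max R₁ R₂ < ‖z‖ := fun z hz => by
    rw [mem_closedBall, dist_eq_norm] at hz
    linarith [norm_sub_norm_le w z, norm_sub_rev w z]
  have hext : ∀ z ∈ closedBall w 2, z ∈ extDomain K := fun z hz => by
    rw [extDomain_eq_compl]
    exact fun hE => by linarith [mem_closedBall_zero_iff.1 (hR₁ hE), le_max_left R₁ R₂, hfar z hz]
  obtain ⟨z, hz, hgz⟩ := exists_eq_of_norm_sub_self_le ((H.ext_holo hne).mono fun z hz =>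
    (hext z hz).1) fun z hz => mem_closedBall_zero_iff.1 (hR₂ ((le_max_right R₁ R₂).trans
      (hfar z hz).le))
  exact ⟨z, hext z (closedBall_subset_closedBall one_le_two hz), hz, hgz⟩

theorem exists_norm_apply_le (r : ℝ) : ∃ M, ∀ z ∈ extDomain K, ‖z‖ ≤ r → ‖g z‖ ≤ M := by
  obtain ⟨R, hR⟩ := H.exists_apply_eq_of_le_norm hne
  refine ⟨max R (r + 2), fun z hz hzr => ?_⟩
  by_contra! hlt
  obtain ⟨z', hz', hdist, hgz'⟩ := hR (g z) ((le_max_left _ _).trans hlt.le)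
  obtain rfl : z' = z := (H.extBij hne).injOn hz' hz hgz'
  rw [dist_eq_norm] at hdist
  linarith [norm_sub_norm_le (g z') z', norm_sub_rev z' (g z'), le_max_right R (r + 2)]

/-- `g_K` is a homeomorphism `ℍ \ K → ℍ` that stays bounded near `x`, so points at which
`Im g_K ≥ ε` stay in a compact subset of `ℍ \ K`, away from `x`. -/
theorem tendsto_im_nhdsWithin_frontier {x : ℂ} (hx : x ∈ frontier (UHP \ K)) :
    Tendsto (fun z => (g z).im) (𝓝[UHP \ K] x) (𝓝 0) := by
  rw [H.isOpen_diff.frontier_eq] at hx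
  obtain ⟨M, hM⟩ := H.exists_norm_apply_le hne (‖x‖ + 1)
  rw [Metric.tendsto_nhds]
  intro ε hε
  set Q := {w : ℂ | ε ≤ w.im} ∩ closedBall 0 M
  have hQ : IsCompact Q := (isCompact_closedBall 0 M).inter_left
    (isClosed_le continuous_const continuous_im)
  have hQU : Q ⊆ g '' (UHP \ K) := fun w hw => H.bij.surjOn (show 0 < w.im from hε.trans_le hw.1)
  have hcont := continuousOn_invFunOn_image H.isOpen_diff H.bij.injOn fun z hz =>
    H.nhds_le_map hne (H.diff_subset_extDomain hz)
  have hC : IsCompact (Function.invFunOn g (UHP \ K) '' Q) :=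
    hQ.image_of_continuousOn (hcont.mono hQU)
  have hxC : x ∉ Function.invFunOn g (UHP \ K) '' Q := fun ⟨w, hw, hwx⟩ =>
    hx.2 (hwx ▸ Function.invFunOn_mem (hQU hw))
  filter_upwards [mem_nhdsWithin_of_mem_nhds (hC.isClosed.isOpen_compl.mem_nhds hxC),
    mem_nhdsWithin_of_mem_nhds (closedBall_mem_nhds x one_pos), self_mem_nhdsWithin]
    with z hzC hzx hzU
  rw [Real.dist_eq, sub_zero, abs_of_pos (H.im_pos hzU)]
  by_contra! hge
  have hzr : ‖z‖ ≤ ‖x‖ + 1 := by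
    rw [mem_closedBall, dist_eq_norm] at hzx
    linarith [norm_sub_norm_le z x]
  exact hzC ⟨g z, ⟨hge, mem_closedBall_zero_iff.2 (hM z (H.diff_subset_extDomain hzU) hzr)⟩,
    H.bij.injOn.leftInvOn_invFunOn hzU⟩

theorem mem_realTrace_of_mem_closure_image {A : Set ℂ} (hA : A ⊆ UHP) {x : ℝ}
    (hx : x ∉ Icc (aK K) (bK K)) (h : (realRestrict g x : ℂ) ∈ closure (g '' (A \ K))) :
    x ∈ realTrace A := by
  have hA' : A \ K ⊆ extDomain K := fun z hz => H.diff_subset_extDomain ⟨hA hz.1, hz.2⟩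
  refine closure_mono sdiff_subset (mem_closure_of_mem_closure_image (isOpen_extDomain H.bounded)
    (H.extBij hne).injOn (fun z hz => H.nhds_le_map hne hz) hA'
    ((ofReal_mem_extDomain_iff H.bounded).2 hx) ?_)
  rwa [H.ofReal_apply hne hx]

end SingleHull

section TwoHulls

variable {K L : Set ℂ} {g gL : ℂ → ℂ} {S SL : Set ℝ} (H : IsHullMap K g S) (hne : K.Nonempty)
  (HL : IsHullMap L gL SL) (hLK : L ⊆ K)
include H hne HL hLK

/-- The maximum principle for the harmonic function `Im g_K - Im g_L`, which tends to `0` at `∞`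
and has nonpositive boundary values on `∂(ℍ \ K)`. -/
theorem im_le_im_of_subset {z : ℂ} (hz : z ∈ UHP \ K) : (g z).im ≤ (gL z).im := by
  set Φ : ℂ → ℂ := fun z => I * (gL z - g z)
  have hre : ∀ z, (Φ z).re = (g z).im - (gL z).im := fun z => by simp [Φ]
  have hdiff : DifferentiableOn ℂ Φ (UHP \ K) :=
    ((HL.holo.mono (sdiff_subset_sdiff_right hLK)).sub H.holo).const_mul I
  have hlim : Tendsto (fun z => (Φ z).re) (cobounded ℂ) (𝓝 0) := by
    simpa [Φ, Function.comp_def] using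
      (continuous_re.tendsto _).comp ((HL.hydro.sub H.hydro).const_mul I)
  refine le_of_forall_pos_le_add fun ε hε => ?_
  have := re_le_of_eventually_re_le H.isOpen_diff hdiff
    ((hlim.eventually (ge_mem_nhds hε)).mono fun _ h _ => h) (fun x hx => ?_) hz
  · linarith [hre z]
  filter_upwards [(H.tendsto_im_nhdsWithin_frontier hne hx).eventually (ge_mem_nhds hε),
    self_mem_nhdsWithin] with w hw hwU
  linarith [hre w, HL.im_pos ⟨hwU.1, fun h => hwU.2 (hLK h)⟩]

variable (hneL : L.Nonempty)
include hneL

/-- On the real axis `Im (g_L - g_K)` vanishes and is nonnegative just above it, so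
`Re (g_L - g_K)'` is nonnegative there. -/
theorem exists_hasDerivAt_realRestrict_sub {x : ℝ} (hx : x ∉ Icc (aK K) (bK K)) :
    ∃ d, HasDerivAt (fun y => realRestrict gL y - realRestrict g y) d x ∧ 0 ≤ d := by
  have hxK : (x : ℂ) ∈ (Kdoub K)ᶜ := ((ofReal_mem_extDomain_iff H.bounded).2 hx).1
  have hxL : (x : ℂ) ∉ Kdoub L := fun h => hxK (Kdoub_mono hLK h)
  have hopen : IsOpen (Kdoub K)ᶜ := (isCompact_Kdoub H.bounded).isClosed.isOpen_compl
  have hQ : DifferentiableAt ℂ (fun z => gL z - g z) x :=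
    (((HL.ext_holo hneL).mono (compl_subset_compl.2 (Kdoub_mono hLK))).sub (H.ext_holo hne))
      |>.differentiableAt (hopen.mem_nhds hxK)
  refine ⟨(deriv (fun z => gL z - g z) x).re, ?_, ?_⟩
  · simpa [realRestrict] using hQ.hasDerivAt.real_of_complex
  refine re_nonneg_of_hasDerivAt_of_im_nonneg hQ.hasDerivAt
    (by simp [HL.real_vals hneL x hxL, H.real_vals hne x hxK]) ?_
  have hvert : Tendsto (fun y : ℝ => (x : ℂ) + y * I) (𝓝 0) (𝓝 x) := by
    simpa using ((continuous_ofReal.mul continuous_const).const_add (x : ℂ)).tendsto (0 : ℝ)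
  filter_upwards [mem_nhdsWithin_of_mem_nhds (hvert (hopen.mem_nhds hxK)), self_mem_nhdsWithin]
    with y hyK hy
  have hyU : (x : ℂ) + y * I ∈ UHP \ K :=
    ⟨by simpa [UHP] using hy, fun h => hyK (Or.inl (subset_closure h))⟩
  simpa using H.im_le_im_of_subset hne HL hLK hyU

theorem monotoneOn_realRestrict_sub {D : Set ℝ} (hD : Convex ℝ D)
    (hsub : D ⊆ (Icc (aK K) (bK K))ᶜ) :
    MonotoneOn (fun y => realRestrict gL y - realRestrict g y) D := by
  choose! d hd hd0 using fun y (hy : y ∈ D) =>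
    H.exists_hasDerivAt_realRestrict_sub hne HL hLK hneL (hsub hy)
  exact monotoneOn_of_hasDerivWithinAt_nonneg hD
    (fun y hy => (hd y hy).continuousAt.continuousWithinAt)
    (fun y hy => (hd y (interior_subset hy)).hasDerivWithinAt)
    fun y hy => hd0 y (interior_subset hy)

theorem realRestrict_le_of_subset_of_bK_lt {x : ℝ} (hx : bK K < x) :
    realRestrict gL x ≤ realRestrict g x := by
  have hmono := H.monotoneOn_realRestrict_sub hne HL hLK hneL (convex_Ioi _)
    fun _ hy => notMem_Icc_of_gt hy
  have hlim := HL.tendsto_realRestrict_sub_atTop.sub H.tendsto_realRestrict_sub_atTop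
  simp only [sub_sub_sub_cancel_right, sub_zero] at hlim
  linarith [ge_of_tendsto hlim ((eventually_ge_atTop x).mono fun y hy =>
    hmono hx (hx.trans_le hy) hy)]

theorem realRestrict_le_of_subset_of_lt_aK {x : ℝ} (hx : x < aK K) :
    realRestrict g x ≤ realRestrict gL x := by
  have hmono := H.monotoneOn_realRestrict_sub hne HL hLK hneL (convex_Iio _)
    fun _ hy => notMem_Icc_of_lt hy
  have hlim := HL.tendsto_realRestrict_sub_atBot.sub H.tendsto_realRestrict_sub_atBot
  simp only [sub_sub_sub_cancel_right, sub_zero] at hlim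
  linarith [le_of_tendsto hlim ((eventually_le_atBot x).mono fun y hy =>
    hmono (hy.trans_lt hx) hx hy)]

/-- Outside `S_L`, `w = g_L(x₀)` for some `x₀ ∈ [a_K, b_K]`; combine with `g_K ≤ g_L` left of `a_K`
and `g_K ≥ g_L` right of `b_K`. -/
theorem sInf_le_and_le_sSup_of_mem_closure_image (htrL : (realTrace L).Nonempty) {w : ℝ}
    (hw : (w : ℂ) ∈ closure (gL '' (K \ L))) : sInf S ≤ w ∧ w ≤ sSup S := by
  have htr := realTrace_mono hLK
  have haa : aK K ≤ aK L := csInf_le_csInf (isBounded_realTrace H.bounded).bddBelow htrL htr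
  have hbb : bK L ≤ bK K := csSup_le_csSup (isBounded_realTrace H.bounded).bddAbove htrL htr
  have hpre : ∀ x₀ ∉ Icc (aK L) (bK L), realRestrict gL x₀ = w → x₀ ∈ Icc (aK K) (bK K) :=
    fun x₀ hx₀ h => realTrace_subset_Icc H.bounded
      (HL.mem_realTrace_of_mem_closure_image hneL H.subset_UHP hx₀ (h ▸ hw))
  constructor
  · refine H.sInf_le_of_forall hne fun x hx =>
      (H.realRestrict_le_of_subset_of_lt_aK hne HL hLK hneL hx).trans ?_
    by_cases hw' : w ∈ realRestrict gL '' Iio (aK L)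
    · obtain ⟨x₀, hx₀, rfl⟩ := hw'
      exact (HL.strictMonoOn_Iio hneL).monotoneOn (hx.trans_le haa) hx₀
        (hx.le.trans (hpre x₀ (notMem_Icc_of_lt hx₀) rfl).1)
    · exact HL.realRestrict_le_of_notMem_image hneL hw' (hx.trans_le haa)
  · refine H.le_sSup_of_forall hne fun x hx =>
      le_trans ?_ (H.realRestrict_le_of_subset_of_bK_lt hne HL hLK hneL hx)
    by_cases hw' : w ∈ realRestrict gL '' Ioi (bK L)
    · obtain ⟨x₀, hx₀, rfl⟩ := hw'
      exact (HL.strictMonoOn_Ioi hneL).monotoneOn hx₀ (hbb.trans_lt hx)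
        ((hpre x₀ (notMem_Icc_of_gt hx₀) rfl).2.trans hx.le)
    · exact HL.le_realRestrict_of_notMem_image hneL hw' (hbb.trans_lt hx)

end TwoHulls

end IsHullMap

theorem stmt_7_general (T : ℝ) (wD : ℝ → ℝ) (hwD : ContinuousOn wD (Set.Ico 0 T))
    (K : ℝ → Set ℂ) (g : ℝ → ℂ → ℂ) (S : ℝ → Set ℝ)
    (hK0 : K 0 = ∅) (hg0 : ∀ z, g 0 z = z)
    (hhull : ∀ t ∈ Set.Ioo 0 T, IsHullMap (K t) (g t) (S t) ∧ (K t).Nonempty)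
    (hmono : ∀ s t : ℝ, 0 ≤ s → s ≤ t → t < T → K s ⊆ K t)
    (hdrive : ∀ t ∈ Set.Ico 0 T, ∀ δ > (0:ℝ), t + δ < T →
      ((wD t : ℝ) : ℂ) ∈ closure (g t '' (K (t + δ) \ K t))) :
    ∀ t₀ ∈ Set.Ioo 0 T, ∀ t ∈ Set.Icc 0 t₀, sInf (S t₀) ≤ wD t ∧ wD t ≤ sSup (S t₀) := by
  intro t₀ ht₀
  obtain ⟨H₀, hne₀⟩ := hhull t₀ ht₀
  have hg0' : g 0 = id := funext hg0
  have hinner : MapsTo wD (Ioo 0 t₀) (Icc (sInf (S t₀)) (sSup (S t₀))) := by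
    intro s hs
    have hsT : s ∈ Ioo 0 T := ⟨hs.1, hs.2.trans ht₀.2⟩
    obtain ⟨Hs, hnes⟩ := hhull s hsT
    -- keeps `aK (K s)` and `bK (K s)` away from the junk values `sInf ∅ = sSup ∅ = 0`
    have htr : wD 0 ∈ realTrace (K s) := by
      simpa [realTrace, hK0, hg0'] using
        hdrive 0 ⟨le_rfl, hsT.1.trans hsT.2⟩ s hsT.1 (by simpa using hsT.2)
    have hdr := hdrive s ⟨hs.1.le, hsT.2⟩ (t₀ - s) (sub_pos.2 hs.2) (by simpa using ht₀.2)
    rw [add_sub_cancel] at hdr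
    exact H₀.sInf_le_and_le_sSup_of_mem_closure_image hne₀ Hs (hmono s t₀ hs.1.le hs.2.le ht₀.2)
      hnes ⟨_, htr⟩ hdr
  have hcont : ContinuousOn wD (closure (Ioo 0 t₀)) := by
    rw [closure_Ioo ht₀.1.ne]
    exact hwD.mono (Icc_subset_Ico_right ht₀.2)
  intro t ht
  rw [← closure_Ioo ht₀.1.ne] at ht
  exact closure_minimal hinner.image_subset isClosed_Icc
    (hcont.image_closure (mem_image_of_mem wD ht))

/-- **The driving function stays between `c_{K_{t₀}}` and `d_{K_{t₀}}`.** If `K_t`, `0 ≤ t < T`,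
are chordal Loewner hulls driven by a continuous function `ŵ` with some speed (encoded by the
driving-point property `ŵ(t) ∈ ⋂_{δ>0} cl(K_{t+δ}/K_t)`), then for every `t₀ ∈ (0,T)` one has
`c_{K_{t₀}} ≤ ŵ(t) ≤ d_{K_{t₀}}` for all `t ∈ [0, t₀]`. -/
theorem stmt_7 (T : ℝ) (hT : 0 < T) (wD : ℝ → ℝ) (hwD : ContinuousOn wD (Set.Ico 0 T))
    (K : ℝ → Set ℂ) (g : ℝ → ℂ → ℂ) (S : ℝ → Set ℝ)
    (hK0 : K 0 = ∅) (hg0 : ∀ z, g 0 z = z)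
    (hhull : ∀ t ∈ Set.Ioo 0 T, IsHullMap (K t) (g t) (S t) ∧ (K t).Nonempty)
    (hmono : ∀ s t : ℝ, 0 ≤ s → s ≤ t → t < T → K s ⊆ K t)
    (hdrive : ∀ t ∈ Set.Ico 0 T, ∀ δ > (0:ℝ), t + δ < T →
      ((wD t : ℝ) : ℂ) ∈ closure (g t '' (K (t + δ) \ K t))) :
    ∀ t₀ ∈ Set.Ioo 0 T, ∀ t ∈ Set.Icc 0 t₀, sInf (S t₀) ≤ wD t ∧ wD t ≤ sSup (S t₀) :=
  stmt_7_general T wD hwD K g S hK0 hg0 hhull hmono hdrive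
end
end

section
/- Optional stopping for two-parameter martingales: let X be a continuous martingale with respect to an ℝ₊²-indexed filtration 𝓕. (i) If X is closed by an integrable random variable ζ (i.e., X_t = E[ζ | 𝓕_t] for all t), then for any finite 𝓕-stopping time T, X_T = E[ζ | 𝓕_T]. (ii) If T ≤ S are two bounded 𝓕-stopping times, then E[X_S | 𝓕_T] = X_T. -/
/-!
Round a stopping time `T` up to the dyadic grid of mesh `2⁻ⁿ` in each coordinate. The rounded
times `Tₙ` are stopping times with countably many values, and on each event `{Tₙ = v}` the
σ-algebras `𝓕_{Tₙ}` and `𝓕_v` agree, so `X_{Tₙ} = E[ζ | 𝓕_{Tₙ}]`. As `n → ∞`, `Tₙ ↓ T`, hence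
`X_{Tₙ} → X_T` by continuity, while the conditional expectations `E[ζ | 𝓕_{Tₙ}]` are uniformly
integrable; since `𝓕_T ⊆ 𝓕_{Tₙ}`, their integrals over events of `𝓕_T` pass to the limit, which
identifies the `𝓕_T`-measurable limit `X_T` with `E[ζ | 𝓕_T]`.

For (ii), the roundings of `T ≤ S ≤ b` never exceed the integer point `⌈b⌉`, at which the
martingale is closed by `X_{⌈b⌉}`; so `X_S` and `X_T` are the conditional expectations of
`X_{⌈b⌉}` given `𝓕_S ⊇ 𝓕_T`, and the tower property concludes.
-/

open MeasureTheory Filter Set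
open scoped NNReal ENNReal

noncomputable section

variable {Ω : Type*}

/-- The event `{T ≤ t}` for an `ℝ₊²`-valued random time. -/
def leE (T : Ω → ℝ≥0 × ℝ≥0) (t : ℝ≥0 × ℝ≥0) : Set Ω := {ω | T ω ≤ t}

/-- `T` is a (finite) stopping time for the `ℝ₊²`-indexed filtration `F`. -/
def IsStopT (F : ℝ≥0 × ℝ≥0 → MeasurableSpace Ω) (T : Ω → ℝ≥0 × ℝ≥0) : Prop :=
  ∀ t : ℝ≥0 × ℝ≥0, MeasurableSet[F t] (leE T t)

/-- `𝓕_∞ = ⋁_t 𝓕_t`. -/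
def FInfty (F : ℝ≥0 × ℝ≥0 → MeasurableSpace Ω) : MeasurableSpace Ω := ⨆ t, F t

/-- The stopped σ-algebra `𝓕_T`. -/
def stopSA (F : ℝ≥0 × ℝ≥0 → MeasurableSpace Ω) (T : Ω → ℝ≥0 × ℝ≥0) :
    MeasurableSpace Ω :=
  MeasurableSpace.generateFrom
    {A | MeasurableSet[FInfty F] A ∧ ∀ t : ℝ≥0 × ℝ≥0, MeasurableSet[F t] (A ∩ leE T t)}

open scoped Topology

def dyadicCeil (n : ℕ) (x : ℝ≥0) : ℝ≥0 := ⌈x * 2 ^ n⌉₊ / 2 ^ n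

def dyadicFloor (n : ℕ) (t : ℝ≥0) : ℝ≥0 := ⌊t * 2 ^ n⌋₊ / 2 ^ n

lemma gc_dyadicCeil_dyadicFloor (n : ℕ) : GaloisConnection (dyadicCeil n) (dyadicFloor n) := by
  intro x t
  rw [dyadicCeil, dyadicFloor, div_le_iff₀ (by positivity), le_div_iff₀ (by positivity),
    ← Nat.le_floor_iff (by positivity), ← Nat.ceil_le]

lemma le_dyadicCeil (n : ℕ) (x : ℝ≥0) : x ≤ dyadicCeil n x := by
  rw [dyadicCeil, le_div_iff₀ (by positivity)]
  exact Nat.le_ceil _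

lemma dyadicCeil_le_add (n : ℕ) (x : ℝ≥0) : dyadicCeil n x ≤ x + 2⁻¹ ^ n := by
  rw [dyadicCeil, div_le_iff₀ (by positivity), add_mul, inv_pow, inv_mul_cancel₀ (by positivity)]
  exact (Nat.ceil_lt_add_one zero_le).le

lemma tendsto_dyadicCeil (x : ℝ≥0) : Tendsto (dyadicCeil · x) atTop (𝓝 x) := by
  have h : Tendsto (fun n : ℕ => x + 2⁻¹ ^ n) atTop (𝓝 (x + 0)) :=
    tendsto_const_nhds.add (NNReal.tendsto_pow_atTop_nhds_zero_of_lt_one two_inv_lt_one)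
  rw [add_zero] at h
  exact tendsto_of_tendsto_of_tendsto_of_le_of_le tendsto_const_nhds h
    (le_dyadicCeil · x) (dyadicCeil_le_add · x)

lemma dyadicFloor_le (n : ℕ) (t : ℝ≥0) : dyadicFloor n t ≤ t := by
  rw [dyadicFloor, div_le_iff₀ (by positivity)]
  exact Nat.floor_le zero_le

lemma dyadicCeil_le_natCast {n m : ℕ} {x : ℝ≥0} (h : x ≤ m) : dyadicCeil n x ≤ m := by
  refine (gc_dyadicCeil_dyadicFloor n).le_iff_le.2 (h.trans_eq ?_)
  rw [dyadicFloor, ← Nat.cast_ofNat, ← Nat.cast_pow, ← Nat.cast_mul, Nat.floor_natCast,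
    Nat.cast_mul, mul_div_cancel_right₀ _ (by positivity)]

lemma countable_range_dyadicCeil (n : ℕ) : (range (dyadicCeil n)).Countable :=
  (countable_range fun k : ℕ => (k : ℝ≥0) / 2 ^ n).mono <| by
    rintro _ ⟨x, rfl⟩
    exact ⟨⌈x * 2 ^ n⌉₊, rfl⟩

def dyadicCeil₂ (n : ℕ) : ℝ≥0 × ℝ≥0 → ℝ≥0 × ℝ≥0 := Prod.map (dyadicCeil n) (dyadicCeil n)

lemma gc_dyadicCeil₂ (n : ℕ) :
    GaloisConnection (dyadicCeil₂ n) (Prod.map (dyadicFloor n) (dyadicFloor n)) := fun _ _ =>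
  and_congr ((gc_dyadicCeil_dyadicFloor n) _ _) ((gc_dyadicCeil_dyadicFloor n) _ _)

lemma le_dyadicCeil₂ (n : ℕ) (p : ℝ≥0 × ℝ≥0) : p ≤ dyadicCeil₂ n p :=
  ⟨le_dyadicCeil n p.1, le_dyadicCeil n p.2⟩

lemma tendsto_dyadicCeil₂ (p : ℝ≥0 × ℝ≥0) : Tendsto (dyadicCeil₂ · p) atTop (𝓝 p) :=
  (tendsto_dyadicCeil p.1).prodMk_nhds (tendsto_dyadicCeil p.2)

lemma countable_range_dyadicCeil₂ (n : ℕ) : (range (dyadicCeil₂ n)).Countable := by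
  rw [dyadicCeil₂, range_prodMap]
  exact (countable_range_dyadicCeil n).prod (countable_range_dyadicCeil n)

lemma dyadicCeil₂_le_natCeil {n : ℕ} {p b : ℝ≥0 × ℝ≥0} (h : p ≤ b) :
    dyadicCeil₂ n p ≤ ((⌈b.1⌉₊ : ℝ≥0), (⌈b.2⌉₊ : ℝ≥0)) :=
  ⟨dyadicCeil_le_natCast (h.1.trans (Nat.le_ceil _)),
    dyadicCeil_le_natCast (h.2.trans (Nat.le_ceil _))⟩

section StoppedSigmaAlgebra

variable {F : ℝ≥0 × ℝ≥0 → MeasurableSpace Ω} {T S : Ω → ℝ≥0 × ℝ≥0}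

lemma stopSA_le {m0 : MeasurableSpace Ω} (hFle : ∀ t, F t ≤ m0) : stopSA F T ≤ m0 :=
  MeasurableSpace.generateFrom_le fun _ hA => iSup_le hFle _ hA.1

lemma measurableSet_stopSA_iff (hT : IsStopT F T) {A : Set Ω} :
    MeasurableSet[stopSA F T] A ↔
      MeasurableSet[FInfty F] A ∧ ∀ t, MeasurableSet[F t] (A ∩ leE T t) := by
  refine ⟨fun h => ?_, fun h => MeasurableSpace.measurableSet_generateFrom h⟩
  induction h with
  | basic A hA => exact hA
  | empty => simp
  | compl A _ ih =>
    refine ⟨ih.1.compl, fun t => ?_⟩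
    rw [← sdiff_eq_compl_inter, ← sdiff_inter_self_eq_sdiff]
    exact (hT t).diff (ih.2 t)
  | iUnion A _ ih =>
    refine ⟨.iUnion fun i => (ih i).1, fun t => ?_⟩
    rw [iUnion_inter]
    exact .iUnion fun i => (ih i).2 t

lemma stopSA_mono (hS : IsStopT F S) (hTS : ∀ ω, T ω ≤ S ω) : stopSA F T ≤ stopSA F S := by
  refine MeasurableSpace.generateFrom_le fun A hA =>
    MeasurableSpace.measurableSet_generateFrom ⟨hA.1, fun t => ?_⟩
  have h : A ∩ leE S t = A ∩ leE T t ∩ leE S t := by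
    ext ω
    simp only [leE, mem_inter_iff, mem_ofPred_eq]
    exact ⟨fun h => ⟨⟨h.1, (hTS ω).trans h.2⟩, h.2⟩, fun h => ⟨h.1.1, h.2⟩⟩
  rw [h]
  exact (hA.2 t).inter (hS t)

lemma measurableSet_stopSA_iff_of_subset (hF : Monotone F) (hT : IsStopT F T)
    {v : ℝ≥0 × ℝ≥0} {A : Set Ω} (hA : A ⊆ T ⁻¹' {v}) :
    MeasurableSet[stopSA F T] A ↔ MeasurableSet[F v] A := by
  rw [measurableSet_stopSA_iff hT]
  have h : ∀ t, A ∩ leE T t = if v ≤ t then A else ∅ := fun t => by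
    split_ifs with hvt
    · exact inter_eq_left.2 fun ω hω => (hA hω : T ω = v).trans_le hvt
    · exact eq_empty_of_forall_notMem fun ω hω => hvt ((hA hω.1 : T ω = v).symm.trans_le hω.2)
  simp only [h]
  refine ⟨fun hA => by simpa using hA.2 v, fun hA => ⟨(le_iSup F v : F v ≤ FInfty F) _ hA, fun t => ?_⟩⟩
  split_ifs with hvt
  · exact hF hvt _ hA
  · exact @MeasurableSet.empty _ (F t)

lemma measurableSet_preimage_singleton (hF : Monotone F) (hT : IsStopT F T)
    (hcount : (range T).Countable) (v : ℝ≥0 × ℝ≥0) : MeasurableSet[F v] (T ⁻¹' {v}) := by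
  have h : T ⁻¹' {v} = leE T v \ ⋃ w ∈ range T ∩ Iio v, leE T w := by
    ext ω
    simp only [leE, mem_preimage, mem_singleton_iff, Set.mem_sdiff, mem_ofPred_eq, mem_iUnion,
      mem_inter_iff, mem_range, mem_Iio, not_exists]
    refine ⟨fun h => ⟨h.le, fun w hw hTw => hw.2.not_ge (h ▸ hTw)⟩,
      fun h => (eq_or_lt_of_le h.1).resolve_right fun hlt => h.2 _ ⟨⟨ω, rfl⟩, hlt⟩ le_rfl⟩
  rw [h]
  exact (hT v).diff (.biUnion (hcount.mono inter_subset_left) fun w hw => hF hw.2.le _ (hT w))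

end StoppedSigmaAlgebra

section StoppedProcess

variable {F : ℝ≥0 × ℝ≥0 → MeasurableSpace Ω} {T : Ω → ℝ≥0 × ℝ≥0}

lemma IsStopT.comp_dyadicCeil₂ (hF : Monotone F) (hT : IsStopT F T) (n : ℕ) :
    IsStopT F (dyadicCeil₂ n ∘ T) := fun t => by
  have h : leE (dyadicCeil₂ n ∘ T) t = leE T (Prod.map (dyadicFloor n) (dyadicFloor n) t) := by
    ext ω
    exact gc_dyadicCeil₂ n _ _
  rw [h]
  exact hF ⟨dyadicFloor_le n t.1, dyadicFloor_le n t.2⟩ _ (hT _)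

lemma iUnion_leE_natCast (T : Ω → ℝ≥0 × ℝ≥0) : ⋃ k : ℕ, leE T ((k : ℝ≥0), (k : ℝ≥0)) = univ := by
  refine eq_univ_of_forall fun ω => mem_iUnion.2 ?_
  obtain ⟨k, hk⟩ := exists_nat_ge (max (T ω).1 (T ω).2)
  exact ⟨k, (le_max_left _ _).trans hk, (le_max_right _ _).trans hk⟩

lemma measurable_of_measurableSet_le {m : MeasurableSpace Ω} {f : Ω → ℝ≥0 × ℝ≥0}
    (hf : ∀ s, MeasurableSet {ω | f ω ≤ s}) : Measurable f := by
  refine Measurable.prodMk (measurable_of_Iic fun a => ?_) (measurable_of_Iic fun a => ?_)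
  · have h : (fun ω => (f ω).1) ⁻¹' Iic a = ⋃ k : ℕ, {ω | f ω ≤ (a, (k : ℝ≥0))} := by
      ext ω
      simp only [mem_preimage, mem_Iic, mem_iUnion, mem_ofPred_eq, Prod.le_def]
      exact ⟨fun h => (exists_nat_ge _).imp fun _ => And.intro h, fun ⟨_, h⟩ => h.1⟩
    rw [h]
    exact .iUnion fun k => hf _
  · have h : (fun ω => (f ω).2) ⁻¹' Iic a = ⋃ k : ℕ, {ω | f ω ≤ ((k : ℝ≥0), a)} := by
      ext ω
      simp only [mem_preimage, mem_Iic, mem_iUnion, mem_ofPred_eq, Prod.le_def]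
      exact ⟨fun h => (exists_nat_ge _).imp fun _ hk => ⟨hk, h⟩, fun ⟨_, h⟩ => h.2⟩
    rw [h]
    exact .iUnion fun k => hf _

lemma measurable_ite_le (hF : Monotone F) (hT : IsStopT F T) (t : ℝ≥0 × ℝ≥0) :
    Measurable[F t] fun ω => if T ω ≤ t then T ω else t := by
  refine @measurable_of_measurableSet_le _ (F t) _ fun s => ?_
  by_cases hts : t ≤ s
  · convert @MeasurableSet.univ _ (F t)
    refine eq_univ_of_forall fun ω => show _ ≤ s from ?_
    split_ifs with h
    exacts [h.trans hts, hts]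
  · have h : {ω | (if T ω ≤ t then T ω else t) ≤ s} = leE T (t ⊓ s) := by
      ext ω
      simp only [mem_ofPred_eq, leE, le_inf_iff]
      split_ifs with h <;> simp [h, hts]
    rw [h]
    exact hF inf_le_left _ (hT _)

variable {E : Type*} [TopologicalSpace E] [TopologicalSpace.PseudoMetrizableSpace E] [MeasurableSpace E]
  [BorelSpace E] {X : ℝ≥0 × ℝ≥0 → Ω → E}

/-- On `{T ≤ t}` the time `T` may be replaced by its clamp at `t`, which is `𝓕_t`-measurable,
and a continuous adapted process is jointly measurable on `[0, t] × Ω`. -/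
lemma measurableSet_preimage_stopped_inter_leE (hF : Monotone F)
    (hadapt : ∀ t, Measurable[F t] (X t)) (hcont : ∀ ω, Continuous fun t => X t ω)
    (hT : IsStopT F T) (t : ℝ≥0 × ℝ≥0) {B : Set E} (hB : MeasurableSet B) :
    MeasurableSet[F t] ((fun ω => X (T ω) ω) ⁻¹' B ∩ leE T t) := by
  let _ : MeasurableSpace Ω := F t
  have hjoint : Measurable (Function.uncurry fun s ω => X (s ⊓ t) ω) :=
    measurable_uncurry_of_continuous_of_measurable
      (fun ω => (hcont ω).comp
        ((continuous_fst.inf continuous_const).prodMk (continuous_snd.inf continuous_const)))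
      (fun s => (hadapt _).mono (hF inf_le_right) le_rfl)
  have h : (fun ω => X (T ω) ω) ⁻¹' B ∩ leE T t =
      (fun ω => X ((if T ω ≤ t then T ω else t) ⊓ t) ω) ⁻¹' B ∩ leE T t := by
    ext ω
    simp only [mem_inter_iff, mem_preimage, leE, mem_ofPred_eq]
    exact ⟨fun h => by rwa [if_pos h.2, inf_eq_left.2 h.2], fun h => by
      rwa [if_pos h.2, inf_eq_left.2 h.2] at h⟩
  rw [h]
  exact (hjoint.comp ((measurable_ite_le hF hT t).prodMk measurable_id) hB).inter (hT t)

lemma measurable_stopped (hF : Monotone F) (hadapt : ∀ t, Measurable[F t] (X t))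
    (hcont : ∀ ω, Continuous fun t => X t ω) (hT : IsStopT F T) :
    Measurable[stopSA F T] fun ω => X (T ω) ω := by
  intro B hB
  have hmeas := fun t => measurableSet_preimage_stopped_inter_leE hF hadapt hcont hT t hB
  refine MeasurableSpace.measurableSet_generateFrom ⟨?_, hmeas⟩
  rw [← inter_univ (_ ⁻¹' B), ← iUnion_leE_natCast T, inter_iUnion]
  exact .iUnion fun k => (le_iSup F _ : F _ ≤ FInfty F) _ (hmeas _)

end StoppedProcess

section OptionalStopping

variable {m0 : MeasurableSpace Ω} {P : Measure Ω} [IsFiniteMeasure P] {ζ : Ω → ℝ}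

lemma ae_eq_condExp_of_tendsto_condExp {m : MeasurableSpace Ω} {G : ℕ → MeasurableSpace Ω}
    (hG : ∀ n, G n ≤ m0) (hmG : ∀ n, m ≤ G n) (hζ : Integrable ζ P) {Y : Ω → ℝ}
    (hY : StronglyMeasurable[m] Y)
    (hlim : ∀ᵐ ω ∂P, Tendsto (fun n => P[ζ|G n] ω) atTop (𝓝 (Y ω))) :
    Y =ᵐ[P] P[ζ|m] := by
  have hUI := hζ.uniformIntegrable_condExp hG
  have hYint : Integrable Y P := hUI.integrable_of_ae_tendsto hlim
  have hL1 := tendsto_Lp_finite_of_tendsto_ae le_rfl ENNReal.one_ne_top hUI.1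
    (memLp_one_iff_integrable.2 hYint) hUI.2.1 hlim
  refine ae_eq_condExp_of_forall_setIntegral_eq ((hmG 0).trans (hG 0)) hζ
    (fun s _ _ => hYint.integrableOn) (fun s hs _ => ?_) hY.aestronglyMeasurable
  refine tendsto_nhds_unique
    (tendsto_setIntegral_of_L1' Y hYint.1 (.of_forall fun n => integrable_condExp) hL1 s) ?_
  simp_rw [setIntegral_condExp (hG _) hζ (hmG _ _ hs)]
  exact tendsto_const_nhds

variable {F : ℝ≥0 × ℝ≥0 → MeasurableSpace Ω} {X : ℝ≥0 × ℝ≥0 → Ω → ℝ}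

lemma stopped_ae_eq_condExp_of_countable_range (hFle : ∀ t, F t ≤ m0) (hF : Monotone F)
    {R : Ω → ℝ≥0 × ℝ≥0} (hR : IsStopT F R) (hcount : (range R).Countable)
    (hcl : ∀ ω, X (R ω) =ᵐ[P] P[ζ|F (R ω)]) :
    (fun ω => X (R ω) ω) =ᵐ[P] P[ζ|stopSA F R] := by
  suffices h : ∀ v ∈ range R,
      (fun ω => X (R ω) ω) =ᵐ[P.restrict (R ⁻¹' {v})] P[ζ|stopSA F R] by
    have h := (ae_restrict_biUnion_iff _ hcount _).2 h
    rwa [biUnion_preimage_singleton, preimage_range, Measure.restrict_univ] at h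
  rintro _ ⟨ω₀, rfl⟩
  have hv := measurableSet_preimage_singleton hF hR hcount (R ω₀)
  have hcond : P[ζ|F (R ω₀)] =ᵐ[P.restrict (R ⁻¹' {R ω₀})] P[ζ|stopSA F R] :=
    condExp_ae_eq_restrict_of_measurableSpace_eq_on (hFle _) (stopSA_le hFle) hv
      (fun A => (measurableSet_stopSA_iff_of_subset hF hR inter_subset_left).symm)
  have hstop : (fun ω => X (R ω) ω) =ᵐ[P.restrict (R ⁻¹' {R ω₀})] X (R ω₀) :=
    ae_restrict_of_forall_mem (hFle _ _ hv) fun ω hω => congrArg (X · ω) (show R ω = R ω₀ from hω)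
  exact hstop.trans (((hcl ω₀).filter_mono ae_restrict_le).trans hcond)

lemma stopped_ae_eq_condExp (hFle : ∀ t, F t ≤ m0) (hF : Monotone F)
    (hadapt : ∀ t, Measurable[F t] (X t)) (hcont : ∀ ω, Continuous fun t => X t ω)
    (hζ : Integrable ζ P) {T : Ω → ℝ≥0 × ℝ≥0} (hT : IsStopT F T)
    (hcl : ∀ n ω, X (dyadicCeil₂ n (T ω)) =ᵐ[P] P[ζ|F (dyadicCeil₂ n (T ω))]) :
    (fun ω => X (T ω) ω) =ᵐ[P] P[ζ|stopSA F T] := by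
  have hTn := hT.comp_dyadicCeil₂ hF
  have hdisc : ∀ n, (fun ω => X (dyadicCeil₂ n (T ω)) ω) =ᵐ[P]
      P[ζ|stopSA F (dyadicCeil₂ n ∘ T)] := fun n =>
    stopped_ae_eq_condExp_of_countable_range hFle hF (hTn n)
      ((countable_range_dyadicCeil₂ n).mono (range_comp_subset_range _ _)) (hcl n)
  refine ae_eq_condExp_of_tendsto_condExp (fun n => stopSA_le hFle)
    (fun n => stopSA_mono (hTn n) fun ω => le_dyadicCeil₂ n (T ω)) hζ
    (measurable_stopped hF hadapt hcont hT).stronglyMeasurable ?_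
  filter_upwards [ae_all_iff.2 hdisc] with ω hω
  simp_rw [← hω]
  exact ((hcont ω).tendsto (T ω)).comp (tendsto_dyadicCeil₂ (T ω))

end OptionalStopping

/-- **Optional stopping for two-parameter martingales** (Proposition 2.27). Let `X` be a
continuous martingale for the `ℝ₊²`-indexed filtration `F`. (i) If `X` is closed by an
integrable `ζ`, then `X_T = E[ζ | 𝓕_T]` for every finite `𝓕`-stopping time `T`.
(ii) If `T ≤ S` are bounded `𝓕`-stopping times, then `E[X_S | 𝓕_T] = X_T`. -/
theorem stmt_15 {m0 : MeasurableSpace Ω} (P : Measure Ω) [IsProbabilityMeasure P]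
    (F : ℝ≥0 × ℝ≥0 → MeasurableSpace Ω)
    (hFle : ∀ t, F t ≤ m0) (hFmono : ∀ s t : ℝ≥0 × ℝ≥0, s ≤ t → F s ≤ F t)
    (X : ℝ≥0 × ℝ≥0 → Ω → ℝ)
    (hadapt : ∀ t, Measurable[F t] (X t))
    (hint : ∀ t, Integrable (X t) P)
    (hmart : ∀ s t : ℝ≥0 × ℝ≥0, s ≤ t → MeasureTheory.condExp (F s) P (X t) =ᵐ[P] X s)
    (hcont : ∀ ω, Continuous fun t : ℝ≥0 × ℝ≥0 => X t ω) :
    ((∀ ζ : Ω → ℝ, Integrable ζ P →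
        (∀ t, X t =ᵐ[P] MeasureTheory.condExp (F t) P ζ) →
        ∀ T : Ω → ℝ≥0 × ℝ≥0, IsStopT F T →
          (fun ω => X (T ω) ω) =ᵐ[P] MeasureTheory.condExp (stopSA F T) P ζ)
    ∧ (∀ T S : Ω → ℝ≥0 × ℝ≥0, IsStopT F T → IsStopT F S → (∀ ω, T ω ≤ S ω) →
        (∃ b : ℝ≥0 × ℝ≥0, ∀ ω, S ω ≤ b) →
        MeasureTheory.condExp (stopSA F T) P (fun ω => X (S ω) ω) =ᵐ[P] fun ω => X (T ω) ω)) := by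
  have hF : Monotone F := fun s t => hFmono s t
  refine ⟨fun ζ hζ hclosed T hT =>
    stopped_ae_eq_condExp hFle hF hadapt hcont hζ hT fun n ω => hclosed _, ?_⟩
  rintro T S hT hS hTS ⟨b, hb⟩
  set c : ℝ≥0 × ℝ≥0 := ((⌈b.1⌉₊ : ℝ≥0), (⌈b.2⌉₊ : ℝ≥0))
  have hcl : ∀ U : Ω → ℝ≥0 × ℝ≥0, (∀ ω, U ω ≤ b) →
      ∀ n ω, X (dyadicCeil₂ n (U ω)) =ᵐ[P] P[X c|F (dyadicCeil₂ n (U ω))] :=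
    fun U hU n ω => (hmart _ _ (dyadicCeil₂_le_natCeil (hU ω))).symm
  have hXS := stopped_ae_eq_condExp hFle hF hadapt hcont (hint c) hS (hcl S hb)
  have hXT := stopped_ae_eq_condExp hFle hF hadapt hcont (hint c) hT
    (hcl T fun ω => (hTS ω).trans (hb ω))
  calc P[fun ω => X (S ω) ω|stopSA F T]
      =ᵐ[P] P[P[X c|stopSA F S]|stopSA F T] := condExp_congr_ae hXS
    _ =ᵐ[P] P[X c|stopSA F T] := condExp_condExp_of_le (stopSA_mono hS hTS) (stopSA_le hFle)
    _ =ᵐ[P] fun ω => X (T ω) ω := hXT.symm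
end
end
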